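/- Suppose D*(θ̄) = D̲(θ̄) and the Baron–Myerson-with-quantity-floor schedule q* does not solve (ROPT) (i.e., V̲(q*(θ)) − θ·q*(θ) − ∫_θ^{θ̄} q*(y) dy < G* for some θ ∈ Θ). Then for every robustly optimal price regulation M̃ and every solution q^OPT of (ROPT), with u^OPT(θ) = ∫_θ^{θ̄} q^OPT(y) dy: W̃(M̃; D*, F*) > W((q^OPT, u^OPT); V*, F*). That is, price regulation strictly dominates quantity regulation. -/

import Mathlib

open MeasureTheory Set

noncomputable section

/-- The base environment: type space `Θ = [θl, θu]`, capacity `qbar`, lowest inverse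
demand `Pl = P̲` (decreasing and continuous on `[0, qbar]` with `Pl 0 > θu`) and the
induced lowest demand `Dl = D̲`, with `Dl θl < qbar`. -/
structure Env where
  θl : ℝ
  θu : ℝ
  qbar : ℝ
  Pl : ℝ → ℝ
  Dl : ℝ → ℝ
  θl_pos : 0 < θl
  θlu : θl < θu
  qbar_pos : 0 < qbar
  Pl_anti : StrictAntiOn Pl (Icc 0 qbar)
  Pl_cont : ContinuousOn Pl (Icc 0 qbar)
  Pl0 : θu < Pl 0
  Dl_inv : ∀ p, Pl qbar ≤ p → p ≤ Pl 0 → Dl p ∈ Icc (0:ℝ) qbar ∧ Pl (Dl p) = p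
  Dl_high : ∀ p, Pl 0 < p → Dl p = 0
  Dl_low : ∀ p, p < Pl qbar → Dl p = qbar
  Dl_lt : Dl θl < qbar

namespace Env

/-- The type space `Θ = [θl, θu]`. -/
def Θ (E : Env) : Set ℝ := Icc E.θl E.θu

/-- The lowest gross value function `V̲ (x) = ∫_0^x P̲`. -/
def Vl (E : Env) (x : ℝ) : ℝ := ∫ s in (0:ℝ)..x, E.Pl s

/-- `q_ℓ = D̲(θu)`: the efficient quantity at the lowest demand and highest cost. -/
def ql (E : Env) : ℝ := E.Dl E.θu

/-- `G* = V̲(q_ℓ) − θu · q_ℓ`: the maximal attainable guarantee. -/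
def Gstar (E : Env) : ℝ := E.Vl E.ql - E.θu * E.ql

/-- A feasible quantity schedule: weakly decreasing on `Θ`, valued in `[0, qbar]`. -/
def IsSchedule (E : Env) (q : ℝ → ℝ) : Prop :=
  AntitoneOn q E.Θ ∧ ∀ θ ∈ E.Θ, q θ ∈ Icc (0:ℝ) E.qbar

/-- `W̲(θ, q) = V̲(q(θ)) − θ q(θ) − ∫_θ^{θu} q`: ex-post welfare at the lowest demand
with zero rent for the highest type. -/
def Wl (E : Env) (q : ℝ → ℝ) (θ : ℝ) : ℝ :=
  E.Vl (q θ) - θ * q θ - ∫ y in θ..E.θu, q y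

/-- An IC and IR (direct) quantity mechanism `(q, u)`. -/
def IsMech (E : Env) (q u : ℝ → ℝ) : Prop :=
  E.IsSchedule q ∧ 0 ≤ u E.θu ∧
    ∀ θ ∈ E.Θ, u θ = u E.θu + ∫ y in θ..E.θu, q y

/-- The set `𝒱` of admissible gross value functions: integrals of decreasing continuous
inverse demands dominating `P̲` pointwise. -/
def IsValue (E : Env) (V : ℝ → ℝ) : Prop :=
  ∃ P : ℝ → ℝ, StrictAntiOn P (Icc 0 E.qbar) ∧ ContinuousOn P (Icc 0 E.qbar) ∧
    (∀ s ∈ Icc (0:ℝ) E.qbar, E.Pl s ≤ P s) ∧ ∀ x, V x = ∫ s in (0:ℝ)..x, P s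

/-- A Borel probability measure supported in `Θ` (the measure of a cdf `F ∈ 𝒻`). -/
def IsTech (E : Env) (μ : Measure ℝ) : Prop :=
  IsProbabilityMeasure μ ∧ μ (E.Θᶜ) = 0

/-- Ex-ante welfare `W(M; V, F)` of the mechanism `(q, u)` under value `V` and
cost technology `μ`. -/
def W (E : Env) (q u V : ℝ → ℝ) (μ : Measure ℝ) : ℝ :=
  ∫ θ, (V (q θ) - θ * q θ - u θ) ∂μ

/-- The welfare guarantee `G(M) = inf_{V ∈ 𝒱, F ∈ 𝒻} W(M; V, F)`. -/
def G (E : Env) (q u : ℝ → ℝ) : ℝ :=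
  sInf {w : ℝ | ∃ (V : ℝ → ℝ) (μ : Measure ℝ),
    E.IsValue V ∧ E.IsTech μ ∧ w = E.W q u V μ}

/-- The short list: IC and IR mechanisms with the highest guarantee. -/
def ShortList (E : Env) (q u : ℝ → ℝ) : Prop :=
  E.IsMech q u ∧ ∀ q' u' : ℝ → ℝ, E.IsMech q' u' → E.G q' u' ≤ E.G q u

/-- Feasibility in the program (ROPT): a schedule satisfying all robustness
constraints `W̲(θ, q) ≥ G*`. -/
def FeasibleROPT (E : Env) (q : ℝ → ℝ) : Prop :=
  E.IsSchedule q ∧ ∀ θ ∈ E.Θ, E.Gstar ≤ E.Wl q θ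

end Env

/-- A demand `D ∈ 𝒟`, bundled with the inverse demand `P` that induces it:
`P` decreasing and continuous on `[0, qbar]`, `P ≥ P̲` pointwise, `P 0 > θu`. -/
structure Demand (E : Env) where
  P : ℝ → ℝ
  D : ℝ → ℝ
  P_anti : StrictAntiOn P (Icc 0 E.qbar)
  P_cont : ContinuousOn P (Icc 0 E.qbar)
  P_ge : ∀ s ∈ Icc (0:ℝ) E.qbar, E.Pl s ≤ P s
  P0 : E.θu < P 0
  D_inv : ∀ p, P E.qbar ≤ p → p ≤ P 0 → D p ∈ Icc (0:ℝ) E.qbar ∧ P (D p) = p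
  D_high : ∀ p, P 0 < p → D p = 0
  D_low : ∀ p, p < P E.qbar → D p = E.qbar
  D_lt : D E.θl < E.qbar

namespace Demand

/-- The gross value function `V_D(x) = ∫_0^x P` induced by a demand `D ∈ 𝒟`. -/
def V {E : Env} (D : Demand E) (x : ℝ) : ℝ := ∫ s in (0:ℝ)..x, D.P s

end Demand

namespace Env

/-- The lowest demand `D̲` as an element of `𝒟`. -/
def DlDemand (E : Env) : Demand E where
  P := E.Pl
  D := E.Dl
  P_anti := E.Pl_anti
  P_cont := E.Pl_cont
  P_ge := fun _ _ => le_refl _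
  P0 := E.Pl0
  D_inv := E.Dl_inv
  D_high := E.Dl_high
  D_low := E.Dl_low
  D_lt := E.Dl_lt

/-- A price regulation `(p, t)`: nonnegative prices and transfers. -/
def IsPriceReg (E : Env) (p : ℝ → ℝ) (t : ℝ → Demand E → ℝ) : Prop :=
  (∀ θ ∈ E.Θ, 0 ≤ p θ) ∧ ∀ θ ∈ E.Θ, ∀ D : Demand E, 0 ≤ t θ D

/-- The rent `ũ(θ, D) = t(θ, D) − θ · D(p(θ))` of the monopolist. -/
def rent (E : Env) (p : ℝ → ℝ) (t : ℝ → Demand E → ℝ) (θ : ℝ) (D : Demand E) : ℝ :=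
  t θ D - θ * D.D (p θ)

/-- Ex-post incentive compatibility of a price regulation. -/
def EPIC (E : Env) (p : ℝ → ℝ) (t : ℝ → Demand E → ℝ) : Prop :=
  ∀ θ ∈ E.Θ, ∀ θ' ∈ E.Θ, ∀ D : Demand E,
    t θ' D - θ * D.D (p θ') ≤ E.rent p t θ D

/-- Ex-post individual rationality of a price regulation. -/
def EPIR (E : Env) (p : ℝ → ℝ) (t : ℝ → Demand E → ℝ) : Prop :=
  ∀ θ ∈ E.Θ, ∀ D : Demand E, 0 ≤ E.rent p t θ D

/-- Ex-post welfare `w̃(θ; D) = V_D(D(p(θ))) − θ·D(p(θ)) − ũ(θ, D)`. -/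
def wt (E : Env) (p : ℝ → ℝ) (t : ℝ → Demand E → ℝ) (θ : ℝ) (D : Demand E) : ℝ :=
  D.V (D.D (p θ)) - θ * D.D (p θ) - E.rent p t θ D

/-- Ex-ante welfare `W̃((p,t); D, F)` of a price regulation. -/
def Wt (E : Env) (p : ℝ → ℝ) (t : ℝ → Demand E → ℝ) (D : Demand E) (μ : Measure ℝ) : ℝ :=
  ∫ θ, E.wt p t θ D ∂μ

/-- The welfare guarantee `G̃((p,t)) = inf_{D ∈ 𝒟, F ∈ 𝒻} W̃((p,t); D, F)`. -/
def Gt (E : Env) (p : ℝ → ℝ) (t : ℝ → Demand E → ℝ) : ℝ :=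
  sInf {w : ℝ | ∃ (D : Demand E) (μ : Measure ℝ), E.IsTech μ ∧ w = E.Wt p t D μ}

/-- An EPIC and EPIR price regulation. -/
def IsAdmissiblePR (E : Env) (p : ℝ → ℝ) (t : ℝ → Demand E → ℝ) : Prop :=
  E.IsPriceReg p t ∧ E.EPIC p t ∧ E.EPIR p t

/-- The price short list: EPIC and EPIR price regulations with the highest guarantee. -/
def PriceShortList (E : Env) (p : ℝ → ℝ) (t : ℝ → Demand E → ℝ) : Prop :=
  E.IsAdmissiblePR p t ∧
    ∀ (p' : ℝ → ℝ) (t' : ℝ → Demand E → ℝ), E.IsAdmissiblePR p' t' → E.Gt p' t' ≤ E.Gt p t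

end Env

/-- The conjectured model: a regular cdf `F*` with density `f*` on `Θ`, and a
conjectured inverse demand `P*` (with induced demand `D*`) dominating `P̲`. -/
structure Model (E : Env) where
  Fstar : ℝ → ℝ
  fstar : ℝ → ℝ
  Pstar : ℝ → ℝ
  Dstar : ℝ → ℝ
  fstar_pos : ∀ θ ∈ E.Θ, 0 < fstar θ
  Fstar_ac : ∀ θ ∈ E.Θ, Fstar θ = ∫ y in E.θl..θ, fstar y
  Fstar_l : Fstar E.θl = 0
  Fstar_u : Fstar E.θu = 1
  zstar_cont : ContinuousOn (fun θ => θ + Fstar θ / fstar θ) E.Θ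
  zstar_mono : StrictMonoOn (fun θ => θ + Fstar θ / fstar θ) E.Θ
  Pstar_anti : StrictAntiOn Pstar (Icc 0 E.qbar)
  Pstar_cont : ContinuousOn Pstar (Icc 0 E.qbar)
  Pstar_ge : ∀ s ∈ Icc (0:ℝ) E.qbar, E.Pl s ≤ Pstar s
  Pstar0 : E.θu < Pstar 0
  Dstar_inv : ∀ p, Pstar E.qbar ≤ p → p ≤ Pstar 0 →
    Dstar p ∈ Icc (0:ℝ) E.qbar ∧ Pstar (Dstar p) = p
  Dstar_high : ∀ p, Pstar 0 < p → Dstar p = 0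
  Dstar_low : ∀ p, p < Pstar E.qbar → Dstar p = E.qbar
  Dstar_lt : Dstar E.θl < E.qbar

namespace Model

variable {E : Env} (Mo : Model E)

/-- The virtual cost `z*(θ) = θ + F*(θ)/f*(θ)`. -/
def zstar (θ : ℝ) : ℝ := θ + Mo.Fstar θ / Mo.fstar θ

/-- The conjectured gross value function `V*(x) = ∫_0^x P*`. -/
def Vstar (x : ℝ) : ℝ := ∫ s in (0:ℝ)..x, Mo.Pstar s

/-- The Baron–Myerson schedule `q^BM(θ) = D*(z*(θ))`. -/
def qBM (θ : ℝ) : ℝ := Mo.Dstar (Mo.zstar θ)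

/-- The Baron–Myerson-with-quantity-floor schedule `q*(θ) = max{q^BM(θ), q_ℓ}`. -/
def qstar (θ : ℝ) : ℝ := max (Mo.qBM θ) E.ql

/-- The objective of (ROPT): expected virtual surplus under the conjectured model. -/
def J (q : ℝ → ℝ) : ℝ :=
  ∫ θ in E.θl..E.θu, (Mo.Vstar (q θ) - Mo.zstar θ * q θ) * Mo.fstar θ

/-- `q` solves the program (ROPT). -/
def SolvesROPT (q : ℝ → ℝ) : Prop :=
  E.FeasibleROPT q ∧ ∀ q' : ℝ → ℝ, E.FeasibleROPT q' → Mo.J q' ≤ Mo.J q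

/-- `θ*`: the unique solution of `q^BM(θ*) = q_ℓ` in `Θ` when `q^BM(θu) < q_ℓ`;
otherwise `θ* = θu`. -/
def IsThetaStar (θs : ℝ) : Prop :=
  (Mo.qBM E.θu < E.ql ∧ θs ∈ E.Θ ∧ Mo.qBM θs = E.ql) ∨
    (E.ql ≤ Mo.qBM E.θu ∧ θs = E.θu)

/-- `θ^m`: the largest minimizer of `W̲(·, q*)` over `Θ`. -/
def IsThetaM (θm : ℝ) : Prop :=
  θm ∈ E.Θ ∧ (∀ θ' ∈ E.Θ, E.Wl Mo.qstar θm ≤ E.Wl Mo.qstar θ') ∧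
    ∀ θ ∈ E.Θ, (∀ θ' ∈ E.Θ, E.Wl Mo.qstar θ ≤ E.Wl Mo.qstar θ') → θ ≤ θm

/-- The conjectured demand `D*` as an element of `𝒟`. -/
def DstarDemand : Demand E where
  P := Mo.Pstar
  D := Mo.Dstar
  P_anti := Mo.Pstar_anti
  P_cont := Mo.Pstar_cont
  P_ge := Mo.Pstar_ge
  P0 := Mo.Pstar0
  D_inv := Mo.Dstar_inv
  D_high := Mo.Dstar_high
  D_low := Mo.Dstar_low
  D_lt := Mo.Dstar_lt

/-- Expected welfare `W((q,u); V*, F*)` of a quantity mechanism under the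
conjectured model. -/
def WStar (q u : ℝ → ℝ) : ℝ :=
  ∫ θ in E.θl..E.θu, (Mo.Vstar (q θ) - θ * q θ - u θ) * Mo.fstar θ

/-- Expected welfare `W̃((p,t); D*, F*)` of a price regulation under the
conjectured model. -/
def WtStar (p : ℝ → ℝ) (t : ℝ → Demand E → ℝ) : ℝ :=
  ∫ θ in E.θl..E.θu, E.wt p t θ Mo.DstarDemand * Mo.fstar θ

/-- A robustly optimal price regulation: in the price short list, and maximizing
expected welfare under the conjectured model over the price short list. -/
def RobustlyOptimalPR (p : ℝ → ℝ) (t : ℝ → Demand E → ℝ) : Prop :=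
  E.PriceShortList p t ∧
    ∀ (p' : ℝ → ℝ) (t' : ℝ → Demand E → ℝ), E.PriceShortList p' t' →
      Mo.WtStar p' t' ≤ Mo.WtStar p t

/-- A Baron–Myerson-with-price-cap regulation. -/
def IsBMPriceCap (p : ℝ → ℝ) (t : ℝ → Demand E → ℝ) : Prop :=
  E.IsAdmissiblePR p t ∧
  (∀ θ ∈ E.Θ, p θ = min (Mo.zstar θ) E.θu) ∧
  (∀ θ ∈ E.Θ, ∀ D : Demand E,
    E.rent p t θ D = E.rent p t E.θu D + ∫ y in θ..E.θu, D.D (p y)) ∧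
  (∀ D : Demand E, D ≠ E.DlDemand → D ≠ Mo.DstarDemand →
    0 ≤ E.rent p t E.θu D ∧
      E.rent p t E.θu D ≤ D.V (D.D E.θu) - E.θu * D.D E.θu - E.Gstar) ∧
  E.rent p t E.θu E.DlDemand = 0 ∧ E.rent p t E.θu Mo.DstarDemand = 0

end Model

/-! ### Auxiliary lemmas for the proof -/

namespace RobustAux

open intervalIntegral

variable {E : Env}

lemma theta_l_mem : E.θl ∈ E.Θ := ⟨le_refl _, E.θlu.le⟩

lemma theta_u_mem : E.θu ∈ E.Θ := ⟨E.θlu.le, le_refl _⟩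

end RobustAux

namespace Demand

variable {E : Env}

/-- The lowest price is below `θl`. -/
lemma P_qbar_le (D : Demand E) : D.P E.qbar ≤ E.θl := by
  by_contra h
  push_neg at h
  have := D.D_low E.θl h
  exact absurd this (by have := D.D_lt; intro hh; rw [hh] at this; exact lt_irrefl _ this)

lemma D_mem (D : Demand E) (p : ℝ) : D.D p ∈ Icc (0:ℝ) E.qbar := by
  rcases lt_or_ge p (D.P E.qbar) with h | h
  · rw [D.D_low p h]; exact ⟨E.qbar_pos.le, le_refl _⟩
  rcases le_or_gt p (D.P 0) with h' | h'
  · exact (D.D_inv p h h').1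
  · rw [D.D_high p h']; exact ⟨le_refl _, E.qbar_pos.le⟩

lemma D_anti (D : Demand E) : Antitone D.D := by
  intro p p' hpp'
  rcases lt_or_ge p' (D.P E.qbar) with h | h
  · rw [D.D_low p' h, D.D_low p (lt_of_le_of_lt hpp' h)]
  rcases le_or_gt p' (D.P 0) with h' | h'
  · rcases lt_or_ge p (D.P E.qbar) with h2 | h2
    · rw [D.D_low p h2]; exact (D.D_mem p').2
    · -- both in invertible range
      have hp' := D.D_inv p' h h'
      have hp := D.D_inv p h2 (hpp'.trans h')
      by_contra hc
      push_neg at hc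
      have := D.P_anti hp.1 hp'.1 hc
      rw [hp.2, hp'.2] at this
      exact absurd hpp' (not_le.2 this)
  · rw [D.D_high p' h']; exact (D.D_mem p).1

/-- On `[θl, θu]` the demand is given by inversion. -/
lemma D_inv' (D : Demand E) {p : ℝ} (h1 : E.θl ≤ p) (h2 : p ≤ E.θu) :
    D.D p ∈ Icc (0:ℝ) E.qbar ∧ D.P (D.D p) = p :=
  D.D_inv p (D.P_qbar_le.trans h1) (h2.trans D.P0.le)

lemma D_P_eq (D : Demand E) {y : ℝ} (hy : y ∈ Icc (0:ℝ) E.qbar) : D.D (D.P y) = y := by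
  have h0 : (0:ℝ) ∈ Icc (0:ℝ) E.qbar := ⟨le_refl _, E.qbar_pos.le⟩
  have hq : E.qbar ∈ Icc (0:ℝ) E.qbar := ⟨E.qbar_pos.le, le_refl _⟩
  have h1 : D.P E.qbar ≤ D.P y := D.P_anti.antitoneOn hy hq hy.2
  have h2 : D.P y ≤ D.P 0 := D.P_anti.antitoneOn h0 hy hy.1
  obtain ⟨hmem, heq⟩ := D.D_inv _ h1 h2
  exact D.P_anti.injOn hmem hy heq

/-- Right continuity (in the decreasing direction) of a demand function. -/
lemma D_right_cont (D : Demand E) (p : ℝ) {ε : ℝ} (hε : 0 < ε) :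
    ∃ δ > 0, ∀ p' ∈ Icc p (p + δ), D.D p - ε < D.D p' := by
  rcases lt_or_ge (D.D p) ε with h | h
  · refine ⟨1, one_pos, fun p' _ => ?_⟩
    have := (D.D_mem p').1
    linarith
  · have hvmem : D.D p - ε/2 ∈ Icc (0:ℝ) E.qbar := ⟨by linarith, by linarith [(D.D_mem p).2]⟩
    have hDc : D.D (D.P (D.D p - ε/2)) = D.D p - ε/2 := D.D_P_eq hvmem
    have hcp : p < D.P (D.D p - ε/2) := by
      by_contra hc
      push_neg at hc
      have := D.D_anti hc
      rw [hDc] at this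
      linarith
    refine ⟨D.P (D.D p - ε/2) - p, by linarith, fun p' hp' => ?_⟩
    have : D.D (D.P (D.D p - ε/2)) ≤ D.D p' := D.D_anti (by linarith [hp'.2])
    rw [hDc] at this
    linarith

lemma intervalIntegrable_P (D : Demand E) {a b : ℝ} (ha : a ∈ Icc (0:ℝ) E.qbar)
    (hb : b ∈ Icc (0:ℝ) E.qbar) : IntervalIntegrable D.P MeasureTheory.volume a b :=
  (D.P_cont.mono (uIcc_subset_Icc ha hb)).intervalIntegrable

lemma V_diff (D : Demand E) {a b : ℝ} (ha : a ∈ Icc (0:ℝ) E.qbar)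
    (hb : b ∈ Icc (0:ℝ) E.qbar) : D.V b - D.V a = ∫ s in a..b, D.P s := by
  have h0 : (0:ℝ) ∈ Icc (0:ℝ) E.qbar := ⟨le_refl _, E.qbar_pos.le⟩
  have := intervalIntegral.integral_add_adjacent_intervals
    (D.intervalIntegrable_P h0 ha) (D.intervalIntegrable_P ha hb)
  simp only [Demand.V]
  linarith

lemma exists_P_bound (D : Demand E) : ∃ C : ℝ, 0 ≤ C ∧ ∀ s ∈ Icc (0:ℝ) E.qbar, |D.P s| ≤ C := by
  obtain ⟨C, hC⟩ := isCompact_Icc.exists_bound_of_continuousOn D.P_cont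
  refine ⟨C, le_trans (abs_nonneg _) (hC 0 ⟨le_refl _, E.qbar_pos.le⟩), fun s hs => hC s hs⟩

lemma V_sub_le (D : Demand E) {a b C : ℝ} (ha : a ∈ Icc (0:ℝ) E.qbar)
    (hb : b ∈ Icc (0:ℝ) E.qbar) (hC : ∀ s ∈ Icc (0:ℝ) E.qbar, |D.P s| ≤ C) :
    |D.V b - D.V a| ≤ C * |b - a| := by
  rw [D.V_diff ha hb, ← Real.norm_eq_abs]
  refine intervalIntegral.norm_integral_le_of_norm_le_const fun x hx => ?_
  rw [Real.norm_eq_abs]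
  exact hC x (uIcc_subset_Icc ha hb (uIoc_subset_uIcc hx))

/-- Strict pointwise maximization of `V x - c x` over `[m, qbar]`. -/
lemma argmax_lt (D : Demand E) {c x0 m : ℝ} (hm : 0 ≤ m) (hx0 : x0 ∈ Icc m E.qbar)
    (hl : ∀ s ∈ Icc (0:ℝ) E.qbar, m ≤ s → s < x0 → c < D.P s)
    (hr : ∀ s ∈ Icc (0:ℝ) E.qbar, x0 < s → D.P s < c) :
    ∀ x ∈ Icc m E.qbar, x ≠ x0 → D.V x - c * x < D.V x0 - c * x0 := by
  intro x hx hne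
  have hx' : x ∈ Icc (0:ℝ) E.qbar := ⟨hm.trans hx.1, hx.2⟩
  have hx0' : x0 ∈ Icc (0:ℝ) E.qbar := ⟨hm.trans hx0.1, hx0.2⟩
  rcases lt_or_gt_of_ne hne with h | h
  · have hint : IntervalIntegrable (fun s => D.P s - c) MeasureTheory.volume x x0 :=
      (D.intervalIntegrable_P hx' hx0').sub intervalIntegrable_const
    have hpos : 0 < ∫ s in x..x0, (D.P s - c) := by
      refine intervalIntegral.intervalIntegral_pos_of_pos_on hint (fun s hs => ?_) h
      have hs' : s ∈ Icc (0:ℝ) E.qbar := ⟨hx'.1.trans hs.1.le, hs.2.le.trans hx0'.2⟩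
      exact sub_pos.2 (hl s hs' (hx.1.trans hs.1.le) hs.2)
    have heq : ∫ s in x..x0, (D.P s - c) = (D.V x0 - D.V x) - c * (x0 - x) := by
      rw [intervalIntegral.integral_sub (D.intervalIntegrable_P hx' hx0') intervalIntegrable_const,
        intervalIntegral.integral_const, ← D.V_diff hx' hx0', smul_eq_mul]
      ring
    rw [heq] at hpos
    nlinarith
  · have hint : IntervalIntegrable (fun s => c - D.P s) MeasureTheory.volume x0 x :=
      (intervalIntegrable_const).sub (D.intervalIntegrable_P hx0' hx')
    have hpos : 0 < ∫ s in x0..x, (c - D.P s) := by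
      refine intervalIntegral.intervalIntegral_pos_of_pos_on hint (fun s hs => ?_) h
      have hs' : s ∈ Icc (0:ℝ) E.qbar := ⟨hx0'.1.trans hs.1.le, hs.2.le.trans hx'.2⟩
      exact sub_pos.2 (hr s hs' hs.1)
    have heq : ∫ s in x0..x, (c - D.P s) = c * (x - x0) - (D.V x - D.V x0) := by
      rw [intervalIntegral.integral_sub intervalIntegrable_const (D.intervalIntegrable_P hx0' hx'),
        intervalIntegral.integral_const, ← D.V_diff hx0' hx', smul_eq_mul]
      ring
    rw [heq] at hpos
    nlinarith

end Demand

namespace RobustAux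

variable {E : Env}

variable (E : Env)

lemma ql_mem : E.ql ∈ Icc (0:ℝ) E.qbar := Demand.D_mem E.DlDemand E.θu

lemma Pl_ql : E.Pl E.ql = E.θu := (Demand.D_inv' E.DlDemand E.θlu.le (le_refl _)).2

lemma ql_pos : 0 < E.ql := by
  rcases (ql_mem E).1.lt_or_eq with h | h
  · exact h
  · exfalso
    have := Pl_ql E
    rw [← h] at this
    have := E.Pl0
    linarith

lemma D_thetau_ge (D : Demand E) : E.ql ≤ D.D E.θu := by
  obtain ⟨hmem, heq⟩ := D.D_inv' E.θlu.le (le_refl _)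
  by_contra h
  push_neg at h
  have h1 : E.Pl (D.D E.θu) ≤ D.P (D.D E.θu) := D.P_ge _ hmem
  have h2 : E.Pl E.ql < E.Pl (D.D E.θu) := E.Pl_anti hmem (ql_mem E) h
  rw [Pl_ql E, heq] at *
  linarith

lemma Vl_sub_lt_Gstar {x : ℝ} (hx : x ∈ Icc (0:ℝ) E.qbar) (hne : x ≠ E.ql) :
    E.Vl x - E.θu * x < E.Gstar := by
  have h := Demand.argmax_lt E.DlDemand (c := E.θu) (x0 := E.ql) (m := 0) (le_refl _)
    (by simpa using ql_mem E)
    (fun s hs _ hlt => by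
      have := E.Pl_anti hs (ql_mem E) hlt
      rw [Pl_ql E] at this; exact this)
    (fun s hs hlt => by
      have := E.Pl_anti (ql_mem E) hs hlt
      rw [Pl_ql E] at this; exact this)
    x (by simpa using hx) hne
  exact h

lemma Vl_sub_le_Gstar {x : ℝ} (hx : x ∈ Icc (0:ℝ) E.qbar) :
    E.Vl x - E.θu * x ≤ E.Gstar := by
  by_cases h : x = E.ql
  · rw [h]; exact le_refl _
  · exact (Vl_sub_lt_Gstar E hx h).le

lemma Gstar_pos : 0 < E.Gstar := by
  have h0 : (0:ℝ) ∈ Icc (0:ℝ) E.qbar := ⟨le_refl _, E.qbar_pos.le⟩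
  have hiP : IntervalIntegrable E.Pl MeasureTheory.volume 0 E.ql :=
    Demand.intervalIntegrable_P E.DlDemand h0 (ql_mem E)
  have hi : IntervalIntegrable (fun s => E.Pl s - E.θu) MeasureTheory.volume 0 E.ql :=
    hiP.sub intervalIntegrable_const
  have hpos : 0 < ∫ s in (0:ℝ)..E.ql, (E.Pl s - E.θu) := by
    refine intervalIntegral.intervalIntegral_pos_of_pos_on hi (fun s hs => ?_) (ql_pos E)
    have hs' : s ∈ Icc (0:ℝ) E.qbar := ⟨hs.1.le, hs.2.le.trans (ql_mem E).2⟩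
    have := E.Pl_anti hs' (ql_mem E) hs.2
    rw [Pl_ql E] at this
    linarith
  have heq : ∫ s in (0:ℝ)..E.ql, (E.Pl s - E.θu) = E.Vl E.ql - E.θu * E.ql := by
    rw [intervalIntegral.integral_sub hiP intervalIntegrable_const,
      intervalIntegral.integral_const, smul_eq_mul]
    show E.Vl E.ql - (E.ql - 0) * E.θu = E.Vl E.ql - E.θu * E.ql
    ring
  rw [heq] at hpos
  exact hpos

lemma wtu_ge (D : Demand E) : E.Gstar ≤ D.V (D.D E.θu) - E.θu * D.D E.θu := by
  obtain ⟨hmem, heq⟩ := D.D_inv' E.θlu.le (le_refl _)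
  have hql := D_thetau_ge E D
  have h0 : (0:ℝ) ∈ Icc (0:ℝ) E.qbar := ⟨le_refl _, E.qbar_pos.le⟩
  have hsplit : D.V (D.D E.θu) =
      (∫ s in (0:ℝ)..E.ql, D.P s) + ∫ s in E.ql..(D.D E.θu), D.P s :=
    (intervalIntegral.integral_add_adjacent_intervals
      (D.intervalIntegrable_P h0 (ql_mem E)) (D.intervalIntegrable_P (ql_mem E) hmem)).symm
  have h1 : E.Vl E.ql ≤ ∫ s in (0:ℝ)..E.ql, D.P s := by
    refine intervalIntegral.integral_mono_on (ql_pos E).le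
      (Demand.intervalIntegrable_P E.DlDemand h0 (ql_mem E))
      (D.intervalIntegrable_P h0 (ql_mem E)) (fun s hs => ?_)
    exact D.P_ge s ⟨hs.1, hs.2.trans (ql_mem E).2⟩
  have h2 : E.θu * (D.D E.θu - E.ql) ≤ ∫ s in E.ql..(D.D E.θu), D.P s := by
    have := intervalIntegral.integral_mono_on hql
      (intervalIntegrable_const (c := E.θu)) (D.intervalIntegrable_P (ql_mem E) hmem)
      (fun s hs => ?_)
    · rw [intervalIntegral.integral_const, smul_eq_mul] at this
      calc E.θu * (D.D E.θu - E.ql) = (D.D E.θu - E.ql) * E.θu := by ring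
        _ ≤ _ := this
    · have hs' : s ∈ Icc (0:ℝ) E.qbar := ⟨(ql_mem E).1.trans hs.1, hs.2.trans hmem.2⟩
      have := D.P_anti.antitoneOn hs' hmem hs.2
      rw [heq] at this
      exact this
  rw [hsplit]
  have : E.Gstar = E.Vl E.ql - E.θu * E.ql := rfl
  nlinarith

end RobustAux

namespace RobustAux

variable {E : Env} {θ : ℝ}

/-- Clamp to the type space. -/
def clampE (E : Env) (θ : ℝ) : ℝ := min (max θ E.θl) E.θu

lemma clamp_mem : clampE E θ ∈ E.Θ :=
  ⟨le_min (le_max_right _ _) E.θlu.le, min_le_right _ _⟩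

lemma clamp_eq {θ : ℝ} (h : θ ∈ E.Θ) : clampE E θ = θ := by
  unfold clampE
  rw [max_eq_left h.1, min_eq_left h.2]

lemma clamp_mono : Monotone (clampE E) :=
  (monotone_id.max monotone_const).min monotone_const

lemma clamp_cont : Continuous (clampE E) :=
  (continuous_id.max continuous_const).min continuous_const

lemma clamp_lip {a b : ℝ} (hab : a ≤ b) : clampE E b - clampE E a ≤ b - a := by
  unfold clampE
  have h1 : max b E.θl ≤ max a E.θl + (b - a) :=
    max_le (by linarith [le_max_left a E.θl]) (by linarith [le_max_right a E.θl])
  have h2 : min (max b E.θl) E.θu ≤ min (max a E.θl + (b - a)) (E.θu + (b - a)) :=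
    le_min ((min_le_left _ _).trans h1) (by linarith [min_le_right (max b E.θl) E.θu])
  rw [min_add_add_right] at h2
  linarith

section ModelAux

variable (Mo : Model E)

lemma Fstar_nonneg {θ : ℝ} (hθ : θ ∈ E.Θ) : 0 ≤ Mo.Fstar θ := by
  rw [Mo.Fstar_ac θ hθ]
  exact intervalIntegral.integral_nonneg hθ.1
    (fun u hu => (Mo.fstar_pos u ⟨hu.1, hu.2.trans hθ.2⟩).le)

lemma zstar_ge {θ : ℝ} (hθ : θ ∈ E.Θ) : θ ≤ Mo.zstar θ := by
  have h1 := Fstar_nonneg Mo hθ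
  have h2 := Mo.fstar_pos θ hθ
  have : 0 ≤ Mo.Fstar θ / Mo.fstar θ := div_nonneg h1 h2.le
  unfold Model.zstar
  linarith

lemma zstar_u_gt : E.θu < Mo.zstar E.θu := by
  have h2 := Mo.fstar_pos E.θu (theta_u_mem)
  have : 0 < Mo.Fstar E.θu / Mo.fstar E.θu := by
    rw [Mo.Fstar_u]
    exact div_pos one_pos h2
  unfold Model.zstar
  linarith

/-- Clamped virtual cost. -/
def zcM (θ : ℝ) : ℝ := Mo.zstar (clampE E θ)

lemma zc_eq {θ : ℝ} (h : θ ∈ E.Θ) : zcM Mo θ = Mo.zstar θ := by rw [zcM, clamp_eq h]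

lemma zc_mono : Monotone (zcM Mo) := fun _ _ hab =>
  Mo.zstar_mono.monotoneOn clamp_mem clamp_mem (clamp_mono hab)

lemma zc_cont : Continuous (zcM Mo) :=
  Mo.zstar_cont.comp_continuous clamp_cont (fun _ => clamp_mem)

lemma zc_ge (θ : ℝ) : clampE E θ ≤ zcM Mo θ := zstar_ge Mo clamp_mem

/-- The Baron–Myerson price cap. -/
def pMc (θ : ℝ) : ℝ := min (zcM Mo θ) E.θu

lemma pM_mono : Monotone (pMc Mo) := (zc_mono Mo).min monotone_const

lemma pM_cont : Continuous (pMc Mo) := (zc_cont Mo).min continuous_const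

lemma pM_mem (θ : ℝ) : pMc Mo θ ∈ E.Θ :=
  ⟨le_min ((clamp_mem).1.trans (zc_ge Mo θ)) E.θlu.le, min_le_right _ _⟩

lemma pM_ge {θ : ℝ} (hθ : θ ∈ E.Θ) : θ ≤ pMc Mo θ := by
  refine le_min ?_ hθ.2
  have := zc_ge Mo θ
  rw [clamp_eq hθ] at this
  exact this

lemma pM_u : pMc Mo E.θu = E.θu := by
  have h := zstar_u_gt Mo
  have : zcM Mo E.θu = Mo.zstar E.θu := zc_eq Mo theta_u_mem
  unfold pMc
  rw [this]
  exact min_eq_right h.le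

/-- Quantity sold under the cap. -/
def xDM (D : Demand E) (θ : ℝ) : ℝ := D.D (pMc Mo θ)

lemma xDM_anti (D : Demand E) : Antitone (xDM Mo D) := fun _ _ h => D.D_anti (pM_mono Mo h)

lemma xDM_mem (D : Demand E) (θ : ℝ) : xDM Mo D θ ∈ Icc (0:ℝ) E.qbar := D.D_mem _

lemma xDM_inv (D : Demand E) (θ : ℝ) : D.P (xDM Mo D θ) = pMc Mo θ :=
  (D.D_inv' (pM_mem Mo θ).1 (pM_mem Mo θ).2).2

lemma xDM_u (D : Demand E) : xDM Mo D E.θu = D.D E.θu := by rw [xDM, pM_u]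

lemma xDM_intInt (D : Demand E) (a b : ℝ) :
    IntervalIntegrable (xDM Mo D) MeasureTheory.volume a b :=
  (xDM_anti Mo D).intervalIntegrable

/-- The rent schedule. -/
def RMc (D : Demand E) (θ : ℝ) : ℝ := ∫ y in (clampE E θ)..E.θu, xDM Mo D y

/-- The transfer. -/
def tMc (θ : ℝ) (D : Demand E) : ℝ := θ * xDM Mo D θ + RMc Mo D θ

lemma RM_nonneg (D : Demand E) (θ : ℝ) : 0 ≤ RMc Mo D θ :=
  intervalIntegral.integral_nonneg (clamp_mem).2 (fun u _ => (xDM_mem Mo D u).1)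

lemma RM_u (D : Demand E) : RMc Mo D E.θu = 0 := by
  unfold RMc
  rw [clamp_eq theta_u_mem, intervalIntegral.integral_same]

lemma RM_diff (D : Demand E) {θ θ' : ℝ} (hθ : θ ∈ E.Θ) (hθ' : θ' ∈ E.Θ) :
    RMc Mo D θ = (∫ y in θ..θ', xDM Mo D y) + RMc Mo D θ' := by
  unfold RMc
  rw [clamp_eq hθ, clamp_eq hθ']
  exact (intervalIntegral.integral_add_adjacent_intervals
    (xDM_intInt Mo D θ θ') (xDM_intInt Mo D θ' E.θu)).symm

lemma rent_eq (D : Demand E) (θ : ℝ) :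
    E.rent (pMc Mo) (tMc Mo) θ D = RMc Mo D θ := by
  unfold Env.rent tMc xDM
  ring

lemma wt_eq (D : Demand E) (θ : ℝ) :
    E.wt (pMc Mo) (tMc Mo) θ D
      = D.V (xDM Mo D θ) - θ * xDM Mo D θ - RMc Mo D θ := by
  unfold Env.wt
  rw [rent_eq]
  rfl

lemma M_admissible : E.IsAdmissiblePR (pMc Mo) (tMc Mo) := by
  refine ⟨⟨fun θ _ => (E.θl_pos.trans_le (pM_mem Mo θ).1).le, fun θ hθ D => ?_⟩, ?_, ?_⟩
  · exact add_nonneg (mul_nonneg (E.θl_pos.trans_le hθ.1).le (xDM_mem Mo D θ).1)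
      (RM_nonneg Mo D θ)
  · intro θ hθ θ' hθ' D
    rw [rent_eq]
    show tMc Mo θ' D - θ * D.D (pMc Mo θ') ≤ RMc Mo D θ
    have hx' : D.D (pMc Mo θ') = xDM Mo D θ' := rfl
    rw [hx', tMc, RM_diff Mo D hθ hθ']
    have hgoal : (θ' - θ) * xDM Mo D θ' ≤ ∫ y in θ..θ', xDM Mo D y := by
      rcases le_total θ θ' with h | h
      · have := intervalIntegral.integral_mono_on h
          (intervalIntegrable_const (c := xDM Mo D θ')) (xDM_intInt Mo D θ θ')
          (fun y hy => xDM_anti Mo D hy.2)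
        rw [intervalIntegral.integral_const, smul_eq_mul] at this
        calc (θ' - θ) * xDM Mo D θ' = (θ' - θ) * xDM Mo D θ' := rfl
          _ ≤ _ := this
      · have := intervalIntegral.integral_mono_on h
          (xDM_intInt Mo D θ' θ) (intervalIntegrable_const (c := xDM Mo D θ'))
          (fun y hy => xDM_anti Mo D hy.1)
        rw [intervalIntegral.integral_const, smul_eq_mul] at this
        rw [intervalIntegral.integral_symm]
        linarith
    linarith
  · intro θ hθ D
    rw [rent_eq]
    exact RM_nonneg Mo D θ

open MeasureTheory in
lemma key_bound (Mo : Model E) (D : Demand E) {θ : ℝ} (hθ : θ ∈ E.Θ) :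
    (∫ y in θ..E.θu, (xDM Mo D y - D.D E.θu))
      ≤ ∫ s in (D.D E.θu)..(xDM Mo D θ), (D.P s - θ) := by
  set xu := D.D E.θu with hxu_def
  set xθ := xDM Mo D θ with hxθ_def
  have hxu_mem : xu ∈ Icc (0:ℝ) E.qbar := D.D_mem _
  have hxθ_mem : xθ ∈ Icc (0:ℝ) E.qbar := xDM_mem Mo D θ
  have hxux : xu ≤ xθ := by
    rw [hxu_def, ← xDM_u Mo D]
    exact xDM_anti Mo D hθ.2
  have hxmeas : Measurable (xDM Mo D) := (xDM_anti Mo D).measurable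
  set μ1 := volume.restrict (Ioc θ E.θu) with hμ1
  set ν := volume.restrict (Ioc xu xθ) with hν
  set S : Set (ℝ × ℝ) := {p : ℝ × ℝ | p.2 < xDM Mo D p.1} with hSdef
  have hS : MeasurableSet S := measurableSet_lt measurable_snd (hxmeas.comp measurable_fst)
  -- integrability of the LHS integrand
  have hIL : IntegrableOn (fun y => xDM Mo D y - xu) (Ioc θ E.θu) volume :=
    (intervalIntegrable_iff_integrableOn_Ioc_of_le hθ.2).1
      ((xDM_intInt Mo D θ E.θu).sub intervalIntegrable_const)
  have hLnn : 0 ≤ᵐ[μ1] fun y => xDM Mo D y - xu := by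
    filter_upwards [ae_restrict_mem measurableSet_Ioc] with y hy
    have : xDM Mo D E.θu ≤ xDM Mo D y := xDM_anti Mo D hy.2
    rw [xDM_u Mo D] at this
    simp only [Pi.zero_apply, sub_nonneg]
    exact this
  -- P s - θ on the RHS
  have hPth : ∀ s ∈ Ioc xu xθ, θ ≤ D.P s := by
    intro s hs
    have hs' : s ∈ Icc (0:ℝ) E.qbar := ⟨hxu_mem.1.trans hs.1.le, hs.2.trans hxθ_mem.2⟩
    have h1 : D.P xθ ≤ D.P s := D.P_anti.antitoneOn hs' hxθ_mem hs.2
    rw [hxθ_def, xDM_inv Mo D θ] at h1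
    exact (pM_ge Mo hθ).trans h1
  have hIR : IntegrableOn (fun s => D.P s - θ) (Ioc xu xθ) volume :=
    (intervalIntegrable_iff_integrableOn_Ioc_of_le hxux).1
      ((D.intervalIntegrable_P hxu_mem hxθ_mem).sub intervalIntegrable_const)
  have hRnn : 0 ≤ᵐ[ν] fun s => D.P s - θ := by
    filter_upwards [ae_restrict_mem measurableSet_Ioc] with s hs
    simp only [Pi.zero_apply, sub_nonneg]
    exact hPth s hs
  -- Evaluate the product measure two ways
  have E1 : (μ1.prod ν) S = ENNReal.ofReal (∫ y in Ioc θ E.θu, (xDM Mo D y - xu)) := by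
    rw [Measure.prod_apply hS]
    have hcong : ∫⁻ y, ν (Prod.mk y ⁻¹' S) ∂μ1
        = ∫⁻ y, ENNReal.ofReal (xDM Mo D y - xu) ∂μ1 := by
      refine lintegral_congr_ae ?_
      filter_upwards [ae_restrict_mem measurableSet_Ioc] with y hy
      have hpre : Prod.mk y ⁻¹' S = Iio (xDM Mo D y) := rfl
      rw [hpre, hν, Measure.restrict_apply measurableSet_Iio]
      have hle : xDM Mo D y ≤ xθ := xDM_anti Mo D hy.1.le
      have hge : xu ≤ xDM Mo D y := by
        have : xDM Mo D E.θu ≤ xDM Mo D y := xDM_anti Mo D hy.2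
        rw [xDM_u Mo D] at this
        exact this
      have hset : Iio (xDM Mo D y) ∩ Ioc xu xθ = Ioo xu (xDM Mo D y) := by
        ext s
        simp only [mem_inter_iff, mem_Iio, mem_Ioc, mem_Ioo]
        constructor
        · rintro ⟨h1, h2, _⟩; exact ⟨h2, h1⟩
        · rintro ⟨h1, h2⟩; exact ⟨h2, h1, (le_of_lt h2).trans hle⟩
      rw [hset, Real.volume_Ioo]
    rw [hcong, ← ofReal_integral_eq_lintegral_ofReal hIL hLnn]
  have E2 : (μ1.prod ν) S ≤ ENNReal.ofReal (∫ s in Ioc xu xθ, (D.P s - θ)) := by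
    rw [Measure.prod_apply_symm hS]
    have hstep : ∫⁻ s, μ1 ((fun y => (y, s)) ⁻¹' S) ∂ν
        ≤ ∫⁻ s, ENNReal.ofReal (D.P s - θ) ∂ν := by
      refine lintegral_mono_ae ?_
      filter_upwards [ae_restrict_mem measurableSet_Ioc] with s hs
      have hpre : (fun y => (y, s)) ⁻¹' S = {y | s < xDM Mo D y} := rfl
      have hmeas2 : MeasurableSet {y | s < xDM Mo D y} :=
        measurableSet_lt measurable_const hxmeas
      rw [hpre, hμ1, Measure.restrict_apply hmeas2]
      have hsub : {y | s < xDM Mo D y} ∩ Ioc θ E.θu ⊆ Ioo θ (D.P s) := by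
        rintro y ⟨hy1, hy2⟩
        have hyΘ : y ∈ E.Θ := ⟨hθ.1.trans hy2.1.le, hy2.2⟩
        have hs' : s ∈ Icc (0:ℝ) E.qbar := ⟨hxu_mem.1.trans hs.1.le, hs.2.trans hxθ_mem.2⟩
        have hPs : pMc Mo y < D.P s := by
          by_contra hc
          push_neg at hc
          have h1 : D.D (D.P s) = s := D.D_P_eq hs'
          have h2 : xDM Mo D y ≤ s := by
            have := D.D_anti hc
            rw [h1] at this
            exact this
          exact absurd hy1 (not_lt.2 h2)
        exact ⟨hy2.1, lt_of_le_of_lt (pM_ge Mo hyΘ) hPs⟩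
      calc volume ({y | s < xDM Mo D y} ∩ Ioc θ E.θu) ≤ volume (Ioo θ (D.P s)) :=
            measure_mono hsub
        _ = ENNReal.ofReal (D.P s - θ) := Real.volume_Ioo
    calc ∫⁻ s, μ1 ((fun y => (y, s)) ⁻¹' S) ∂ν ≤ _ := hstep
      _ = ENNReal.ofReal (∫ s in Ioc xu xθ, (D.P s - θ)) :=
          (ofReal_integral_eq_lintegral_ofReal hIR hRnn).symm
  rw [E1] at E2
  have hle : (∫ y in Ioc θ E.θu, (xDM Mo D y - xu))
      ≤ ∫ s in Ioc xu xθ, (D.P s - θ) := by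
    have hRint_nn : 0 ≤ ∫ s in Ioc xu xθ, (D.P s - θ) :=
      setIntegral_nonneg measurableSet_Ioc (fun s hs => sub_nonneg.2 (hPth s hs))
    exact (ENNReal.ofReal_le_ofReal_iff hRint_nn).1 E2
  rw [intervalIntegral.integral_of_le hθ.2, intervalIntegral.integral_of_le hxux]
  exact hle

/-- The Baron–Myerson price-cap regulation has ex-post welfare at least `G*`. -/
lemma wt_ge_Gstar (Mo : Model E) (D : Demand E) {θ : ℝ} (hθ : θ ∈ E.Θ) :
    E.Gstar ≤ E.wt (pMc Mo) (tMc Mo) θ D := by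
  rw [wt_eq]
  set xu := D.D E.θu with hxu_def
  set xθ := xDM Mo D θ with hxθ_def
  have hxu_mem : xu ∈ Icc (0:ℝ) E.qbar := D.D_mem _
  have hxθ_mem : xθ ∈ Icc (0:ℝ) E.qbar := xDM_mem Mo D θ
  have hxux : xu ≤ xθ := by
    rw [hxu_def, ← xDM_u Mo D]
    exact xDM_anti Mo D hθ.2
  have hkey := key_bound Mo D hθ
  have hVdiff : D.V xθ - D.V xu = ∫ s in xu..xθ, D.P s := D.V_diff hxu_mem hxθ_mem
  have hsplit1 : ∫ s in xu..xθ, (D.P s - θ) = (D.V xθ - D.V xu) - θ * (xθ - xu) := by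
    rw [intervalIntegral.integral_sub (D.intervalIntegrable_P hxu_mem hxθ_mem)
      intervalIntegrable_const, intervalIntegral.integral_const, smul_eq_mul, ← hVdiff]
    ring
  have hsplit2 : ∫ y in θ..E.θu, (xDM Mo D y - xu)
      = (∫ y in θ..E.θu, xDM Mo D y) - (E.θu - θ) * xu := by
    rw [intervalIntegral.integral_sub (xDM_intInt Mo D θ E.θu) intervalIntegrable_const,
      intervalIntegral.integral_const, smul_eq_mul]
  have hRM : RMc Mo D θ = ∫ y in θ..E.θu, xDM Mo D y := by
    unfold RMc
    rw [clamp_eq hθ]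
  have hwtu := wtu_ge E D
  rw [hsplit1, hsplit2] at hkey
  rw [hRM]
  have : xDM Mo D θ = xθ := rfl
  nlinarith [hkey, hwtu]

end ModelAux

open MeasureTheory in
lemma dirac_compl_zero {a : ℝ} (ha : a ∈ E.Θ) : (Measure.dirac a) (E.Θᶜ) = 0 := by
  have hm : MeasurableSet (E.Θᶜ) := (measurableSet_Icc (a := E.θl) (b := E.θu)).compl
  rw [Measure.dirac_apply' _ hm, Set.indicator_of_notMem (notMem_compl_iff.2 ha)]

lemma clamp_abs (a b : ℝ) : |clampE E a - clampE E b| ≤ |a - b| := by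
  rcases le_total a b with h | h
  · have h1 := clamp_lip (E := E) h
    have h2 := clamp_mono (E := E) h
    rw [abs_sub_comm, abs_sub_comm a b, abs_of_nonneg (sub_nonneg.2 h2),
      abs_of_nonneg (sub_nonneg.2 h)]
    linarith
  · have h1 := clamp_lip (E := E) h
    have h2 := clamp_mono (E := E) h
    rw [abs_of_nonneg (sub_nonneg.2 h2), abs_of_nonneg (sub_nonneg.2 h)]
    linarith

section ModelAux2

variable (Mo : Model E)

lemma xDM_abs_le (D : Demand E) (y : ℝ) : |xDM Mo D y| ≤ E.qbar := by
  have := xDM_mem Mo D y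
  rw [abs_of_nonneg this.1]
  exact this.2

lemma RM_sub (D : Demand E) (a b : ℝ) :
    |RMc Mo D a - RMc Mo D b| ≤ E.qbar * |a - b| := by
  have hadj := intervalIntegral.integral_add_adjacent_intervals
    (xDM_intInt Mo D (clampE E a) (clampE E b)) (xDM_intInt Mo D (clampE E b) E.θu)
  have hdiff : RMc Mo D a - RMc Mo D b = ∫ y in (clampE E a)..(clampE E b), xDM Mo D y := by
    unfold RMc
    linarith
  rw [hdiff]
  calc |∫ y in (clampE E a)..(clampE E b), xDM Mo D y|
      ≤ E.qbar * |clampE E b - clampE E a| := by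
        rw [← Real.norm_eq_abs]
        exact intervalIntegral.norm_integral_le_of_norm_le_const (fun y _ => by
          rw [Real.norm_eq_abs]; exact xDM_abs_le Mo D y)
    _ ≤ E.qbar * |a - b| := by
        have := clamp_abs (E := E) b a
        rw [abs_sub_comm a b]
        exact mul_le_mul_of_nonneg_left this E.qbar_pos.le

lemma RM_cont (D : Demand E) : Continuous (RMc Mo D) := by
  rw [Metric.continuous_iff]
  intro b ε hε
  refine ⟨ε / (E.qbar + 1), div_pos hε (by linarith [E.qbar_pos]), fun a hab => ?_⟩
  rw [Real.dist_eq] at *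
  calc |RMc Mo D a - RMc Mo D b| ≤ E.qbar * |a - b| := RM_sub Mo D a b
    _ ≤ E.qbar * (ε / (E.qbar + 1)) := mul_le_mul_of_nonneg_left hab.le E.qbar_pos.le
    _ < ε := by
        rw [mul_div_assoc']
        rw [div_lt_iff₀ (by linarith [E.qbar_pos])]
        nlinarith [E.qbar_pos]

lemma VxDM_meas (D : Demand E) : Measurable (fun θ => D.V (xDM Mo D θ)) := by
  have hdecomp : ∀ θ, D.V (xDM Mo D θ)
      = (∫ s in (0:ℝ)..(xDM Mo D θ), (D.P s - D.P E.qbar)) + D.P E.qbar * xDM Mo D θ := by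
    intro θ
    have h0 : (0:ℝ) ∈ Icc (0:ℝ) E.qbar := ⟨le_refl _, E.qbar_pos.le⟩
    rw [intervalIntegral.integral_sub (D.intervalIntegrable_P h0 (xDM_mem Mo D θ))
      intervalIntegrable_const, intervalIntegral.integral_const, smul_eq_mul]
    show D.V (xDM Mo D θ) = D.V (xDM Mo D θ) - (xDM Mo D θ - 0) * D.P E.qbar
      + D.P E.qbar * xDM Mo D θ
    ring
  have hanti : Antitone (fun θ => ∫ s in (0:ℝ)..(xDM Mo D θ), (D.P s - D.P E.qbar)) := by
    intro a b hab
    have hx : xDM Mo D b ≤ xDM Mo D a := xDM_anti Mo D hab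
    have hma := xDM_mem Mo D a
    have hmb := xDM_mem Mo D b
    have h0 : (0:ℝ) ∈ Icc (0:ℝ) E.qbar := ⟨le_refl _, E.qbar_pos.le⟩
    have hint : ∀ u v : ℝ, u ∈ Icc (0:ℝ) E.qbar → v ∈ Icc (0:ℝ) E.qbar →
        IntervalIntegrable (fun s => D.P s - D.P E.qbar) MeasureTheory.volume u v :=
      fun u v hu hv => (D.intervalIntegrable_P hu hv).sub intervalIntegrable_const
    have hadj := intervalIntegral.integral_add_adjacent_intervals
      (hint 0 (xDM Mo D b) h0 hmb) (hint (xDM Mo D b) (xDM Mo D a) hmb hma)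
    have hnn : 0 ≤ ∫ s in (xDM Mo D b)..(xDM Mo D a), (D.P s - D.P E.qbar) := by
      refine intervalIntegral.integral_nonneg hx (fun s hs => ?_)
      have hs' : s ∈ Icc (0:ℝ) E.qbar := ⟨hmb.1.trans hs.1, hs.2.trans hma.2⟩
      have hq : E.qbar ∈ Icc (0:ℝ) E.qbar := ⟨E.qbar_pos.le, le_refl _⟩
      exact sub_nonneg.2 (D.P_anti.antitoneOn hs' hq hs'.2)
    simp only []
    linarith
  have : (fun θ => D.V (xDM Mo D θ))
      = fun θ => (∫ s in (0:ℝ)..(xDM Mo D θ), (D.P s - D.P E.qbar))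
          + D.P E.qbar * xDM Mo D θ := funext hdecomp
  rw [this]
  exact hanti.measurable.add (measurable_const.mul (xDM_anti Mo D).measurable)

lemma wt_meas (D : Demand E) : Measurable (fun θ => E.wt (pMc Mo) (tMc Mo) θ D) := by
  have : (fun θ => E.wt (pMc Mo) (tMc Mo) θ D)
      = fun θ => D.V (xDM Mo D θ) - θ * xDM Mo D θ - RMc Mo D θ :=
    funext (fun θ => wt_eq Mo D θ)
  rw [this]
  exact ((VxDM_meas Mo D).sub (measurable_id.mul (xDM_anti Mo D).measurable)).sub
    (RM_cont Mo D).measurable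

lemma wt_bound (D : Demand E) : ∃ C : ℝ, ∀ θ ∈ E.Θ, |E.wt (pMc Mo) (tMc Mo) θ D| ≤ C := by
  obtain ⟨Cp, hCp0, hCp⟩ := D.exists_P_bound
  refine ⟨Cp * E.qbar + E.θu * E.qbar + E.qbar * (E.θu - E.θl), fun θ hθ => ?_⟩
  rw [wt_eq]
  have h0 : (0:ℝ) ∈ Icc (0:ℝ) E.qbar := ⟨le_refl _, E.qbar_pos.le⟩
  have hxm := xDM_mem Mo D θ
  have hV : |D.V (xDM Mo D θ)| ≤ Cp * E.qbar := by
    have hV0 : D.V 0 = 0 := intervalIntegral.integral_same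
    have := D.V_sub_le h0 hxm hCp
    rw [hV0, sub_zero, sub_zero, abs_of_nonneg hxm.1] at this
    exact this.trans (mul_le_mul_of_nonneg_left hxm.2 hCp0)
  have hθx : |θ * xDM Mo D θ| ≤ E.θu * E.qbar := by
    rw [abs_mul, abs_of_nonneg ((E.θl_pos.trans_le hθ.1).le),
      abs_of_nonneg hxm.1]
    exact mul_le_mul hθ.2 hxm.2 hxm.1 (E.θl_pos.trans E.θlu).le
  have hRM : |RMc Mo D θ| ≤ E.qbar * (E.θu - E.θl) := by
    unfold RMc
    rw [← Real.norm_eq_abs]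
    calc ‖∫ y in (clampE E θ)..E.θu, xDM Mo D y‖
        ≤ E.qbar * |E.θu - clampE E θ| :=
          intervalIntegral.norm_integral_le_of_norm_le_const (fun y _ => by
            rw [Real.norm_eq_abs]; exact xDM_abs_le Mo D y)
      _ ≤ E.qbar * (E.θu - E.θl) := by
          have h1 := (clamp_mem (E := E) (θ := θ)).1
          have h2 := (clamp_mem (E := E) (θ := θ)).2
          rw [abs_of_nonneg (by linarith)]
          exact mul_le_mul_of_nonneg_left (by linarith) E.qbar_pos.le
  calc |D.V (xDM Mo D θ) - θ * xDM Mo D θ - RMc Mo D θ|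
      ≤ |D.V (xDM Mo D θ)| + |θ * xDM Mo D θ| + |RMc Mo D θ| := by
        have := abs_sub (D.V (xDM Mo D θ) - θ * xDM Mo D θ) (RMc Mo D θ)
        have h2 := abs_sub (D.V (xDM Mo D θ)) (θ * xDM Mo D θ)
        calc |D.V (xDM Mo D θ) - θ * xDM Mo D θ - RMc Mo D θ|
            ≤ |D.V (xDM Mo D θ) - θ * xDM Mo D θ| + |RMc Mo D θ| := abs_sub _ _
          _ ≤ |D.V (xDM Mo D θ)| + |θ * xDM Mo D θ| + |RMc Mo D θ| := by
              have := abs_sub (D.V (xDM Mo D θ)) (θ * xDM Mo D θ)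
              linarith
    _ ≤ Cp * E.qbar + E.θu * E.qbar + E.qbar * (E.θu - E.θl) := by linarith

open MeasureTheory in
lemma Gt_M_ge : E.Gstar ≤ E.Gt (pMc Mo) (tMc Mo) := by
  unfold Env.Gt
  refine le_csInf ⟨E.Wt (pMc Mo) (tMc Mo) E.DlDemand (Measure.dirac E.θl),
    E.DlDemand, Measure.dirac E.θl, ⟨Measure.dirac.isProbabilityMeasure,
    dirac_compl_zero theta_l_mem⟩, rfl⟩ ?_
  rintro w ⟨D, μ, ⟨hprob, hsupp⟩, rfl⟩
  haveI := hprob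
  have haeΘ : ∀ᵐ θ ∂μ, θ ∈ E.Θ := by
    rw [MeasureTheory.ae_iff]
    have : {θ | ¬ θ ∈ E.Θ} = E.Θᶜ := rfl
    rw [this]
    exact hsupp
  obtain ⟨C, hC⟩ := wt_bound Mo D
  have hint : Integrable (fun θ => E.wt (pMc Mo) (tMc Mo) θ D) μ := by
    refine Integrable.mono' (integrable_const C) (wt_meas Mo D).aestronglyMeasurable ?_
    filter_upwards [haeΘ] with θ hθ
    rw [Real.norm_eq_abs]
    exact hC θ hθ
  have hmono : ∫ θ, E.Gstar ∂μ ≤ ∫ θ, E.wt (pMc Mo) (tMc Mo) θ D ∂μ := by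
    refine integral_mono_ae (integrable_const _) hint ?_
    filter_upwards [haeΘ] with θ hθ
    exact wt_ge_Gstar Mo D hθ
  rw [integral_const, probReal_univ, one_smul] at hmono
  exact hmono

open MeasureTheory in
lemma Gt_le_Gstar (p' : ℝ → ℝ) (t' : ℝ → Demand E → ℝ) (h : E.IsAdmissiblePR p' t') :
    E.Gt p' t' ≤ E.Gstar := by
  set w0 := E.Wt p' t' E.DlDemand (Measure.dirac E.θu) with hw0
  have hmem : w0 ∈ {w : ℝ | ∃ (D : Demand E) (μ : Measure ℝ), E.IsTech μ ∧ w = E.Wt p' t' D μ} :=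
    ⟨E.DlDemand, Measure.dirac E.θu, ⟨Measure.dirac.isProbabilityMeasure,
      dirac_compl_zero theta_u_mem⟩, rfl⟩
  have hw0le : w0 ≤ E.Gstar := by
    have : w0 = E.wt p' t' E.θu E.DlDemand := by
      rw [hw0]
      exact integral_dirac _ _
    rw [this]
    unfold Env.wt
    have hrent : 0 ≤ E.rent p' t' E.θu E.DlDemand := h.2.2 E.θu theta_u_mem E.DlDemand
    have hx := Demand.D_mem E.DlDemand (p' E.θu)
    have hVle : E.DlDemand.V (E.DlDemand.D (p' E.θu)) - E.θu * E.DlDemand.D (p' E.θu)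
        ≤ E.Gstar := Vl_sub_le_Gstar E hx
    linarith
  unfold Env.Gt
  by_cases hb : BddBelow {w : ℝ | ∃ (D : Demand E) (μ : Measure ℝ),
    E.IsTech μ ∧ w = E.Wt p' t' D μ}
  · exact (csInf_le hb hmem).trans hw0le
  · rw [Real.sInf_of_not_bddBelow hb]
    exact (Gstar_pos E).le

lemma M_shortlist : E.PriceShortList (pMc Mo) (tMc Mo) :=
  ⟨M_admissible Mo, fun p' t' h => (Gt_le_Gstar p' t' h).trans (Gt_M_ge Mo)⟩

end ModelAux2

section FubiniAux

open MeasureTheory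

variable (Mo : Model E)

lemma fstar_intOn : IntegrableOn Mo.fstar (Ioc E.θl E.θu) volume := by
  by_contra h
  have h2 : ¬ IntervalIntegrable Mo.fstar volume E.θl E.θu := by
    rw [intervalIntegrable_iff_integrableOn_Ioc_of_le E.θlu.le]
    exact h
  have h3 := intervalIntegral.integral_undef h2
  have hF := Mo.Fstar_ac E.θu theta_u_mem
  rw [Mo.Fstar_u, h3] at hF
  exact one_ne_zero hF

lemma fstar_intInt {a b : ℝ} (ha : a ∈ E.Θ) (hb : b ∈ E.Θ) :
    IntervalIntegrable Mo.fstar MeasureTheory.volume a b := by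
  rw [intervalIntegrable_iff]
  refine (fstar_intOn Mo).mono_set ?_
  rw [uIoc]
  exact Ioc_subset_Ioc (le_min ha.1 hb.1) (max_le ha.2 hb.2)

/-- Clamped cdf. -/
def FcM (θ : ℝ) : ℝ := ∫ y in E.θl..(clampE E θ), Mo.fstar y

lemma FcM_eq {θ : ℝ} (hθ : θ ∈ E.Θ) : FcM Mo θ = Mo.Fstar θ := by
  rw [FcM, clamp_eq hθ, ← Mo.Fstar_ac θ hθ]

lemma FcM_mono : Monotone (FcM Mo) := by
  intro a b hab
  have h1 : clampE E a ∈ E.Θ := clamp_mem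
  have h2 : clampE E b ∈ E.Θ := clamp_mem
  have hc := clamp_mono (E := E) hab
  have hadj := intervalIntegral.integral_add_adjacent_intervals
    (fstar_intInt Mo theta_l_mem h1) (fstar_intInt Mo h1 h2)
  have hnn : 0 ≤ ∫ y in (clampE E a)..(clampE E b), Mo.fstar y :=
    intervalIntegral.integral_nonneg hc (fun u hu =>
      (Mo.fstar_pos u ⟨h1.1.trans hu.1, hu.2.trans h2.2⟩).le)
  show (∫ y in E.θl..(clampE E a), Mo.fstar y) ≤ ∫ y in E.θl..(clampE E b), Mo.fstar y
  linarith

lemma FcM_mem (θ : ℝ) : FcM Mo θ ∈ Icc (0:ℝ) 1 := by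
  constructor
  · rw [FcM, ← Mo.Fstar_ac _ (clamp_mem (θ := θ))]
    exact Fstar_nonneg Mo clamp_mem
  · have h1 : clampE E θ ∈ E.Θ := clamp_mem
    have hadj := intervalIntegral.integral_add_adjacent_intervals
      (fstar_intInt Mo theta_l_mem h1) (fstar_intInt Mo h1 theta_u_mem)
    have hnn : 0 ≤ ∫ y in (clampE E θ)..E.θu, Mo.fstar y :=
      intervalIntegral.integral_nonneg h1.2 (fun u hu =>
        (Mo.fstar_pos u ⟨h1.1.trans hu.1, hu.2⟩).le)
    have hu : ∫ y in E.θl..E.θu, Mo.fstar y = 1 := by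
      rw [← Mo.Fstar_ac E.θu theta_u_mem, Mo.Fstar_u]
    rw [FcM]
    linarith

/-- Lipschitz continuity of partial integrals of a bounded antitone function. -/
lemma prim_cont {qc : ℝ → ℝ} (hanti : Antitone qc) (hmem : ∀ y, qc y ∈ Icc (0:ℝ) E.qbar)
    (c : ℝ) : Continuous (fun θ => ∫ y in θ..c, qc y) := by
  rw [Metric.continuous_iff]
  intro b ε hε
  refine ⟨ε / (E.qbar + 1), div_pos hε (by linarith [E.qbar_pos]), fun a hab => ?_⟩
  rw [Real.dist_eq] at *
  have hadj := intervalIntegral.integral_add_adjacent_intervals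
    (hanti.intervalIntegrable (μ := MeasureTheory.volume) (a := a) (b := b))
    (hanti.intervalIntegrable (μ := MeasureTheory.volume) (a := b) (b := c))
  have hd : (∫ y in a..c, qc y) - (∫ y in b..c, qc y) = ∫ y in a..b, qc y := by linarith
  calc |(∫ y in a..c, qc y) - ∫ y in b..c, qc y| = |∫ y in a..b, qc y| := by rw [hd]
    _ ≤ E.qbar * |b - a| := by
        rw [← Real.norm_eq_abs]
        refine intervalIntegral.norm_integral_le_of_norm_le_const (fun y _ => ?_)
        rw [Real.norm_eq_abs, abs_of_nonneg (hmem y).1]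
        exact (hmem y).2
    _ ≤ E.qbar * (ε / (E.qbar + 1)) := by
        rw [abs_sub_comm]
        exact mul_le_mul_of_nonneg_left hab.le E.qbar_pos.le
    _ < ε := by
        rw [mul_div_assoc']
        rw [div_lt_iff₀ (by linarith [E.qbar_pos])]
        nlinarith [E.qbar_pos]

/-- Measurability of `V ∘ q` for an antitone quantity schedule. -/
lemma V_comp_meas (D : Demand E) {qc : ℝ → ℝ} (hanti : Antitone qc)
    (hmem : ∀ y, qc y ∈ Icc (0:ℝ) E.qbar) : Measurable (fun θ => D.V (qc θ)) := by
  have h0 : (0:ℝ) ∈ Icc (0:ℝ) E.qbar := ⟨le_refl _, E.qbar_pos.le⟩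
  have hdecomp : ∀ θ, D.V (qc θ)
      = (∫ s in (0:ℝ)..(qc θ), (D.P s - D.P E.qbar)) + D.P E.qbar * qc θ := by
    intro θ
    rw [intervalIntegral.integral_sub (D.intervalIntegrable_P h0 (hmem θ))
      intervalIntegrable_const, intervalIntegral.integral_const, smul_eq_mul]
    show D.V (qc θ) = D.V (qc θ) - (qc θ - 0) * D.P E.qbar + D.P E.qbar * qc θ
    ring
  have hanti2 : Antitone (fun θ => ∫ s in (0:ℝ)..(qc θ), (D.P s - D.P E.qbar)) := by
    intro a b hab
    have hx : qc b ≤ qc a := hanti hab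
    have hint : ∀ u v : ℝ, u ∈ Icc (0:ℝ) E.qbar → v ∈ Icc (0:ℝ) E.qbar →
        IntervalIntegrable (fun s => D.P s - D.P E.qbar) MeasureTheory.volume u v :=
      fun u v hu hv => (D.intervalIntegrable_P hu hv).sub intervalIntegrable_const
    have hadj := intervalIntegral.integral_add_adjacent_intervals
      (hint 0 (qc b) h0 (hmem b)) (hint (qc b) (qc a) (hmem b) (hmem a))
    have hnn : 0 ≤ ∫ s in (qc b)..(qc a), (D.P s - D.P E.qbar) := by
      refine intervalIntegral.integral_nonneg hx (fun s hs => ?_)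
      have hs' : s ∈ Icc (0:ℝ) E.qbar := ⟨(hmem b).1.trans hs.1, hs.2.trans (hmem a).2⟩
      have hq : E.qbar ∈ Icc (0:ℝ) E.qbar := ⟨E.qbar_pos.le, le_refl _⟩
      exact sub_nonneg.2 (D.P_anti.antitoneOn hs' hq hs'.2)
    simp only []
    linarith
  have : (fun θ => D.V (qc θ))
      = fun θ => (∫ s in (0:ℝ)..(qc θ), (D.P s - D.P E.qbar)) + D.P E.qbar * qc θ :=
    funext hdecomp
  rw [this]
  exact hanti2.measurable.add (measurable_const.mul hanti.measurable)

open MeasureTheory in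
lemma Vstar_abs_bound {x Cp : ℝ} (hx : x ∈ Icc (0:ℝ) E.qbar)
    (hCp0 : 0 ≤ Cp) (hCp : ∀ s ∈ Icc (0:ℝ) E.qbar, |(Mo.DstarDemand).P s| ≤ Cp) :
    |Mo.Vstar x| ≤ Cp * E.qbar := by
  have hV0 : (Mo.DstarDemand).V 0 = 0 := intervalIntegral.integral_same
  have h0 : (0:ℝ) ∈ Icc (0:ℝ) E.qbar := ⟨le_refl _, E.qbar_pos.le⟩
  have h := (Mo.DstarDemand).V_sub_le h0 hx hCp
  rw [hV0, sub_zero, sub_zero, abs_of_nonneg hx.1] at h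
  exact h.trans (mul_le_mul_of_nonneg_left hx.2 hCp0)

open MeasureTheory in
lemma I1int {qc : ℝ → ℝ} (hanti : Antitone qc) (hmem : ∀ y, qc y ∈ Icc (0:ℝ) E.qbar) :
    IntegrableOn (fun θ => (Mo.Vstar (qc θ) - θ * qc θ) * Mo.fstar θ)
      (Ioc E.θl E.θu) MeasureTheory.volume := by
  obtain ⟨Cp, hCp0, hCp⟩ := (Mo.DstarDemand).exists_P_bound
  have hmeas : Measurable (fun θ => Mo.Vstar (qc θ) - θ * qc θ) :=
    (V_comp_meas Mo.DstarDemand hanti hmem).sub (measurable_id.mul hanti.measurable)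
  refine Integrable.bdd_mul (c := Cp * E.qbar + E.θu * E.qbar) (fstar_intOn Mo)
    hmeas.aestronglyMeasurable ?_
  filter_upwards [ae_restrict_mem measurableSet_Ioc] with θ hθ
  rw [Real.norm_eq_abs]
  have hV : |Mo.Vstar (qc θ)| ≤ Cp * E.qbar := Vstar_abs_bound Mo (hmem θ) hCp0 hCp
  have hθq : |θ * qc θ| ≤ E.θu * E.qbar := by
    rw [abs_mul, abs_of_nonneg (E.θl_pos.trans hθ.1).le, abs_of_nonneg (hmem θ).1]
    exact mul_le_mul hθ.2 (hmem θ).2 (hmem θ).1 (E.θl_pos.trans E.θlu).le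
  calc |Mo.Vstar (qc θ) - θ * qc θ| ≤ |Mo.Vstar (qc θ)| + |θ * qc θ| := abs_sub _ _
    _ ≤ Cp * E.qbar + E.θu * E.qbar := by linarith

open MeasureTheory in
lemma I2int {qc : ℝ → ℝ} (hanti : Antitone qc) (hmem : ∀ y, qc y ∈ Icc (0:ℝ) E.qbar) :
    IntegrableOn (fun θ => (∫ y in θ..E.θu, qc y) * Mo.fstar θ)
      (Ioc E.θl E.θu) MeasureTheory.volume := by
  refine Integrable.bdd_mul (c := E.qbar * (E.θu - E.θl)) (fstar_intOn Mo)
    (prim_cont hanti hmem E.θu).measurable.aestronglyMeasurable ?_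
  filter_upwards [ae_restrict_mem measurableSet_Ioc] with θ hθ
  rw [Real.norm_eq_abs]
  calc |∫ y in θ..E.θu, qc y| ≤ E.qbar * |E.θu - θ| := by
        rw [← Real.norm_eq_abs]
        refine intervalIntegral.norm_integral_le_of_norm_le_const (fun y _ => ?_)
        rw [Real.norm_eq_abs, abs_of_nonneg (hmem y).1]
        exact (hmem y).2
    _ ≤ E.qbar * (E.θu - E.θl) := by
        rw [abs_of_nonneg (sub_nonneg.2 hθ.2)]
        exact mul_le_mul_of_nonneg_left (by linarith [hθ.1]) E.qbar_pos.le

open MeasureTheory in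
lemma I3int {qc : ℝ → ℝ} (hanti : Antitone qc) (hmem : ∀ y, qc y ∈ Icc (0:ℝ) E.qbar) :
    IntegrableOn (fun θ => FcM Mo θ * qc θ) (Ioc E.θl E.θu) MeasureTheory.volume := by
  haveI : IsFiniteMeasure (MeasureTheory.volume.restrict (Ioc E.θl E.θu)) :=
    ⟨by rw [Measure.restrict_apply_univ]; exact measure_Ioc_lt_top⟩
  refine Integrable.mono' (integrable_const E.qbar)
    ((FcM_mono Mo).measurable.mul hanti.measurable).aestronglyMeasurable ?_
  refine Filter.Eventually.of_forall (fun θ => ?_)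
  rw [Real.norm_eq_abs, abs_mul, abs_of_nonneg (FcM_mem Mo θ).1, abs_of_nonneg (hmem θ).1]
  calc FcM Mo θ * qc θ ≤ 1 * E.qbar :=
        mul_le_mul (FcM_mem Mo θ).2 (hmem θ).2 (hmem θ).1 one_pos.le
    _ = E.qbar := one_mul _

open MeasureTheory in
lemma fubini_main {qc : ℝ → ℝ} (hanti : Antitone qc) (hmem : ∀ y, qc y ∈ Icc (0:ℝ) E.qbar) :
    ∫ θ in E.θl..E.θu, (∫ y in θ..E.θu, qc y) * Mo.fstar θ
      = ∫ θ in E.θl..E.θu, FcM Mo θ * qc θ := by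
  have hsm : MeasurableSet (Ioc E.θl E.θu) := measurableSet_Ioc
  set m := MeasureTheory.volume.restrict (Ioc E.θl E.θu) with hm
  -- measurable a.e. version of fstar
  have hae := (fstar_intOn Mo).aestronglyMeasurable
  set f1 : ℝ → ℝ := hae.mk Mo.fstar with hf1def
  have hf1meas : Measurable f1 := hae.stronglyMeasurable_mk.measurable
  have hff1 : Mo.fstar =ᵐ[m] f1 := hae.ae_eq_mk
  set U : ℝ → ℝ := fun θ => ∫ y in θ..E.θu, qc y with hU
  have hUnn : ∀ θ ∈ Ioc E.θl E.θu, 0 ≤ U θ := fun θ hθ =>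
    intervalIntegral.integral_nonneg hθ.2 (fun y _ => (hmem y).1)
  have hLnn : 0 ≤ᵐ[m] fun θ => U θ * Mo.fstar θ := by
    filter_upwards [ae_restrict_mem hsm] with θ hθ
    exact mul_nonneg (hUnn θ hθ) (Mo.fstar_pos θ ⟨hθ.1.le, hθ.2⟩).le
  have hRnn : 0 ≤ᵐ[m] fun θ => FcM Mo θ * qc θ :=
    Filter.Eventually.of_forall (fun θ => mul_nonneg (FcM_mem Mo θ).1 (hmem θ).1)
  have hLI : Integrable (fun θ => U θ * Mo.fstar θ) m := I2int Mo hanti hmem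
  have hRI : Integrable (fun θ => FcM Mo θ * qc θ) m := I3int Mo hanti hmem
  rw [intervalIntegral.integral_of_le E.θlu.le, intervalIntegral.integral_of_le E.θlu.le]
  refine (ENNReal.ofReal_eq_ofReal_iff (integral_nonneg_of_ae hLnn)
    (integral_nonneg_of_ae hRnn)).1 ?_
  set Fp : ℝ × ℝ → ENNReal := fun p =>
    ({q : ℝ × ℝ | q.1 < q.2}.indicator (fun _ => (1:ENNReal)) p)
      * ENNReal.ofReal (qc p.2) * ENNReal.ofReal (f1 p.1) with hFp
  have hFpmeas : Measurable Fp := by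
    refine Measurable.mul (Measurable.mul ?_ ?_) ?_
    · exact measurable_const.indicator (measurableSet_lt measurable_fst measurable_snd)
    · exact (hanti.measurable.comp measurable_snd).ennreal_ofReal
    · exact (hf1meas.comp measurable_fst).ennreal_ofReal
  have hf1nn : ∀ᵐ θ ∂m, 0 ≤ f1 θ := by
    filter_upwards [ae_restrict_mem hsm, hff1] with θ hθ heq
    rw [← heq]
    exact (Mo.fstar_pos θ ⟨hθ.1.le, hθ.2⟩).le
  -- Step 1 : LHS as an iterated lower integral
  have step1 : ENNReal.ofReal (∫ θ in Ioc E.θl E.θu, U θ * Mo.fstar θ)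
      = ∫⁻ θ, (∫⁻ y, Fp (θ, y) ∂m) ∂m := by
    rw [ofReal_integral_eq_lintegral_ofReal hLI hLnn]
    refine lintegral_congr_ae ?_
    filter_upwards [ae_restrict_mem hsm, hff1] with θ hθ heq
    have hqcI : IntegrableOn qc (Ioc θ E.θu) MeasureTheory.volume :=
      (intervalIntegrable_iff_integrableOn_Ioc_of_le hθ.2).1
        (hanti.intervalIntegrable (μ := MeasureTheory.volume))
    have hU1 : U θ = ∫ y in Ioc θ E.θu, qc y := intervalIntegral.integral_of_le hθ.2
    have hU2 : ENNReal.ofReal (U θ) = ∫⁻ y in Ioc θ E.θu, ENNReal.ofReal (qc y) := by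
      rw [hU1]
      exact ofReal_integral_eq_lintegral_ofReal hqcI
        (Filter.Eventually.of_forall (fun y => (hmem y).1))
    have hset : Ioi θ ∩ Ioc E.θl E.θu = Ioc θ E.θu := by
      ext y
      simp only [mem_inter_iff, mem_Ioi, mem_Ioc]
      constructor
      · rintro ⟨h1, _, h3⟩; exact ⟨h1, h3⟩
      · rintro ⟨h1, h2⟩; exact ⟨h1, hθ.1.trans h1, h2⟩
    have hU3 : ∫⁻ y in Ioc θ E.θu, ENNReal.ofReal (qc y)
        = ∫⁻ y, (Ioi θ).indicator (fun y => ENNReal.ofReal (qc y)) y ∂m := by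
      rw [lintegral_indicator measurableSet_Ioi, hm, Measure.restrict_restrict measurableSet_Ioi,
        hset]
    have hpoint : ∀ y, (Ioi θ).indicator (fun y => ENNReal.ofReal (qc y)) y
        * ENNReal.ofReal (f1 θ) = Fp (θ, y) := by
      intro y
      by_cases hy : θ < y
      · simp only [hFp, indicator_apply, mem_Ioi, mem_setOf_eq, hy, if_pos, one_mul]
      · simp only [hFp, indicator_apply, mem_Ioi, mem_setOf_eq, hy, if_neg, not_false_iff,
          zero_mul, mul_zero]
    calc ENNReal.ofReal (U θ * Mo.fstar θ)
        = ENNReal.ofReal (U θ) * ENNReal.ofReal (f1 θ) := by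
          rw [ENNReal.ofReal_mul (hUnn θ hθ), heq]
      _ = (∫⁻ y, (Ioi θ).indicator (fun y => ENNReal.ofReal (qc y)) y ∂m)
            * ENNReal.ofReal (f1 θ) := by rw [hU2, hU3]
      _ = ∫⁻ y, (Ioi θ).indicator (fun y => ENNReal.ofReal (qc y)) y
            * ENNReal.ofReal (f1 θ) ∂m := by
          rw [lintegral_mul_const' _ _ ENNReal.ofReal_ne_top]
      _ = ∫⁻ y, Fp (θ, y) ∂m := by
          refine lintegral_congr (fun y => ?_)
          exact hpoint y
  -- Step 2 : swap
  have step2 : ∫⁻ θ, (∫⁻ y, Fp (θ, y) ∂m) ∂m = ∫⁻ y, (∫⁻ θ, Fp (θ, y) ∂m) ∂m :=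
    lintegral_lintegral_swap hFpmeas.aemeasurable
  -- Step 3 : inner evaluation
  have step3 : ∫⁻ y, (∫⁻ θ, Fp (θ, y) ∂m) ∂m
      = ENNReal.ofReal (∫ θ in Ioc E.θl E.θu, FcM Mo θ * qc θ) := by
    rw [ofReal_integral_eq_lintegral_ofReal hRI hRnn]
    refine lintegral_congr_ae ?_
    filter_upwards [ae_restrict_mem hsm] with y hy
    have hpoint : ∀ θ, Fp (θ, y)
        = (Iio y).indicator (fun θ => ENNReal.ofReal (f1 θ)) θ * ENNReal.ofReal (qc y) := by
      intro θ
      by_cases hθy : θ < y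
      · simp only [hFp, indicator_apply, mem_Iio, mem_setOf_eq, hθy, if_pos, one_mul]
        ring
      · simp only [hFp, indicator_apply, mem_Iio, mem_setOf_eq, hθy, if_neg, not_false_iff,
          zero_mul, mul_zero]
    have hset : Iio y ∩ Ioc E.θl E.θu = Ioo E.θl y := by
      ext θ
      simp only [mem_inter_iff, mem_Iio, mem_Ioc, mem_Ioo]
      constructor
      · rintro ⟨h1, h2, _⟩; exact ⟨h2, h1⟩
      · rintro ⟨h1, h2⟩; exact ⟨h2, h1, (le_of_lt h2).trans hy.2⟩
    have hsub : Ioc E.θl y ⊆ Ioc E.θl E.θu := Ioc_subset_Ioc (le_refl _) hy.2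
    have hfsub : IntegrableOn Mo.fstar (Ioc E.θl y) MeasureTheory.volume :=
      (fstar_intOn Mo).mono_set hsub
    have hff1sub : Mo.fstar =ᵐ[MeasureTheory.volume.restrict (Ioc E.θl y)] f1 := by
      rw [hm] at hff1
      exact ae_restrict_of_ae_restrict_of_subset hsub hff1
    have hf1sub : IntegrableOn f1 (Ioc E.θl y) MeasureTheory.volume :=
      hfsub.congr hff1sub
    have hf1subnn : 0 ≤ᵐ[MeasureTheory.volume.restrict (Ioc E.θl y)] f1 := by
      filter_upwards [ae_restrict_mem measurableSet_Ioc, hff1sub] with θ hθ heq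
      rw [← heq]
      exact (Mo.fstar_pos θ ⟨hθ.1.le, hθ.2.trans hy.2⟩).le
    have hinner : ∫⁻ θ, (Iio y).indicator (fun θ => ENNReal.ofReal (f1 θ)) θ ∂m
        = ENNReal.ofReal (FcM Mo y) := by
      rw [lintegral_indicator measurableSet_Iio, hm,
        Measure.restrict_restrict measurableSet_Iio, hset,
        Measure.restrict_congr_set Ioo_ae_eq_Ioc,
        ← ofReal_integral_eq_lintegral_ofReal hf1sub hf1subnn]
      congr 1
      rw [← integral_congr_ae hff1sub]
      have : FcM Mo y = ∫ θ in E.θl..y, Mo.fstar θ := by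
        rw [FcM, clamp_eq ⟨hy.1.le, hy.2⟩]
      rw [this, intervalIntegral.integral_of_le (hy.1.le.trans (le_refl _))]
    calc ∫⁻ θ, Fp (θ, y) ∂m
        = ∫⁻ θ, (Iio y).indicator (fun θ => ENNReal.ofReal (f1 θ)) θ
            * ENNReal.ofReal (qc y) ∂m := lintegral_congr (fun θ => hpoint θ)
      _ = (∫⁻ θ, (Iio y).indicator (fun θ => ENNReal.ofReal (f1 θ)) θ ∂m)
            * ENNReal.ofReal (qc y) := lintegral_mul_const' _ _ ENNReal.ofReal_ne_top
      _ = ENNReal.ofReal (FcM Mo y) * ENNReal.ofReal (qc y) := by rw [hinner]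
      _ = ENNReal.ofReal (FcM Mo y * qc y) := (ENNReal.ofReal_mul (FcM_mem Mo y).1).symm
  rw [step1, step2, step3]

open MeasureTheory in
lemma WJ {qc : ℝ → ℝ} (hanti : Antitone qc) (hmem : ∀ y, qc y ∈ Icc (0:ℝ) E.qbar) :
    ∫ θ in E.θl..E.θu, (Mo.Vstar (qc θ) - θ * qc θ - ∫ y in θ..E.θu, qc y) * Mo.fstar θ
      = ∫ θ in E.θl..E.θu, (Mo.Vstar (qc θ) - Mo.zstar θ * qc θ) * Mo.fstar θ := by
  have hI1 : IntervalIntegrable (fun θ => (Mo.Vstar (qc θ) - θ * qc θ) * Mo.fstar θ)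
      MeasureTheory.volume E.θl E.θu := by
    rw [intervalIntegrable_iff_integrableOn_Ioc_of_le E.θlu.le]
    exact I1int Mo hanti hmem
  have hI2 : IntervalIntegrable (fun θ => (∫ y in θ..E.θu, qc y) * Mo.fstar θ)
      MeasureTheory.volume E.θl E.θu := by
    rw [intervalIntegrable_iff_integrableOn_Ioc_of_le E.θlu.le]
    exact I2int Mo hanti hmem
  have hI3 : IntervalIntegrable (fun θ => FcM Mo θ * qc θ)
      MeasureTheory.volume E.θl E.θu := by
    rw [intervalIntegrable_iff_integrableOn_Ioc_of_le E.θlu.le]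
    exact I3int Mo hanti hmem
  have hsplit : ∫ θ in E.θl..E.θu,
      (Mo.Vstar (qc θ) - θ * qc θ - ∫ y in θ..E.θu, qc y) * Mo.fstar θ
      = (∫ θ in E.θl..E.θu, (Mo.Vstar (qc θ) - θ * qc θ) * Mo.fstar θ)
        - ∫ θ in E.θl..E.θu, (∫ y in θ..E.θu, qc y) * Mo.fstar θ := by
    rw [← intervalIntegral.integral_sub hI1 hI2]
    refine intervalIntegral.integral_congr (fun θ _ => ?_)
    ring
  have hsplit2 : ∫ θ in E.θl..E.θu, (Mo.Vstar (qc θ) - Mo.zstar θ * qc θ) * Mo.fstar θ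
      = (∫ θ in E.θl..E.θu, (Mo.Vstar (qc θ) - θ * qc θ) * Mo.fstar θ)
        - ∫ θ in E.θl..E.θu, FcM Mo θ * qc θ := by
    rw [← intervalIntegral.integral_sub hI1 hI3]
    refine intervalIntegral.integral_congr (fun θ hθ => ?_)
    rw [uIcc_of_le E.θlu.le] at hθ
    have hf := Mo.fstar_pos θ hθ
    have hz : Mo.zstar θ * Mo.fstar θ = θ * Mo.fstar θ + Mo.Fstar θ := by
      unfold Model.zstar
      field_simp
    rw [FcM_eq Mo hθ]
    linear_combination (-(qc θ)) * hz
  rw [hsplit, hsplit2, fubini_main Mo hanti hmem]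

end FubiniAux

section DstarAux

variable (Mo : Model E)

lemma min_lip {a b c : ℝ} (hab : a ≤ b) : min b c - min a c ≤ b - a := by
  have h1 : min b c ≤ min (a + (b - a)) (c + (b - a)) :=
    le_min ((min_le_left _ _).trans (by linarith)) ((min_le_right _ _).trans (by linarith))
  rw [min_add_add_right] at h1
  linarith

/-- Under `hDeq`, the quantity sold to `D*` under the cap is the floored BM schedule. -/
lemma xDM_Dstar_eq (hDeq : Mo.Dstar E.θu = E.Dl E.θu) (θ : ℝ) :
    xDM Mo Mo.DstarDemand θ = max (Mo.DstarDemand.D (zcM Mo θ)) E.ql := by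
  have hql : E.ql = Mo.DstarDemand.D E.θu := hDeq.symm
  rcases le_total (zcM Mo θ) E.θu with h | h
  · have hp : pMc Mo θ = zcM Mo θ := min_eq_left h
    rw [xDM, hp, eq_comm]
    refine max_eq_left ?_
    rw [hql]
    exact Mo.DstarDemand.D_anti h
  · have hp : pMc Mo θ = E.θu := min_eq_right h
    rw [xDM, hp, eq_comm, ← hql]
    refine max_eq_right ?_
    rw [hql]
    exact Mo.DstarDemand.D_anti h

lemma xDM_qstar (hDeq : Mo.Dstar E.θu = E.Dl E.θu) {θ : ℝ} (hθ : θ ∈ E.Θ) :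
    xDM Mo Mo.DstarDemand θ = Mo.qstar θ := by
  rw [xDM_Dstar_eq Mo hDeq θ]
  unfold Model.qstar Model.qBM
  rw [zc_eq Mo hθ]
  rfl

lemma qS_mem_ql (hDeq : Mo.Dstar E.θu = E.Dl E.θu) (θ : ℝ) :
    xDM Mo Mo.DstarDemand θ ∈ Icc E.ql E.qbar := by
  rw [xDM_Dstar_eq Mo hDeq θ]
  exact ⟨le_max_right _ _,
    max_le (Mo.DstarDemand.D_mem _).2 (ql_mem E).2⟩

lemma P_ql_Dstar (hDeq : Mo.Dstar E.θu = E.Dl E.θu) :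
    Mo.DstarDemand.P E.ql = E.θu := by
  have hql : E.ql = Mo.DstarDemand.D E.θu := hDeq.symm
  rw [hql]
  exact (Mo.DstarDemand.D_inv' E.θlu.le (le_refl _)).2

/-- Pointwise strict optimality of the floored BM schedule over `[q_ℓ, qbar]`. -/
lemma psi_max (hDeq : Mo.Dstar E.θu = E.Dl E.θu) {θ : ℝ} (hθ : θ ∈ E.Θ) {x : ℝ}
    (hx : x ∈ Icc E.ql E.qbar) (hne : x ≠ xDM Mo Mo.DstarDemand θ) :
    Mo.Vstar x - Mo.zstar θ * x
      < Mo.Vstar (xDM Mo Mo.DstarDemand θ) - Mo.zstar θ * xDM Mo Mo.DstarDemand θ := by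
  set D := Mo.DstarDemand with hD
  set z := Mo.zstar θ with hz
  have hzc : zcM Mo θ = z := zc_eq Mo hθ
  have hx0eq : xDM Mo Mo.DstarDemand θ = max (D.D z) E.ql := by
    rw [xDM_Dstar_eq Mo hDeq θ, hzc]
  have hzl : E.θl ≤ z := hθ.1.trans (zstar_ge Mo hθ)
  have hql : E.ql = D.D E.θu := hDeq.symm
  have hx0mem : xDM Mo Mo.DstarDemand θ ∈ Icc E.ql E.qbar := qS_mem_ql Mo hDeq θ
  have h := D.argmax_lt (c := z) (m := E.ql) (ql_pos E).le hx0mem ?_ ?_ x hx hne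
  · exact h
  · -- left condition
    intro s hs hms hlt
    rw [hx0eq] at hlt
    by_cases hzP : z ≤ D.P 0
    · obtain ⟨hDzmem, hDzinv⟩ := D.D_inv z (D.P_qbar_le.trans hzl) hzP
      have hsDz : s < D.D z := by
        rcases le_total (D.D z) E.ql with hcase | hcase
        · rw [max_eq_right hcase] at hlt
          linarith
        · rw [max_eq_left hcase] at hlt
          exact hlt
      have := D.P_anti hs hDzmem hsDz
      rw [hDzinv] at this
      exact this
    · push_neg at hzP
      have hDz : D.D z = 0 := D.D_high z hzP
      rw [hDz, max_eq_right (ql_mem E).1] at hlt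
      linarith
  · -- right condition
    intro s hs hlt
    rw [hx0eq] at hlt
    by_cases hzP : z ≤ D.P 0
    · obtain ⟨hDzmem, hDzinv⟩ := D.D_inv z (D.P_qbar_le.trans hzl) hzP
      rcases le_total (D.D z) E.ql with hcase | hcase
      · rw [max_eq_right hcase] at hlt
        rcases le_or_gt z E.θu with hzu | hzu
        · have hge : E.ql ≤ D.D z := by
            have := D.D_anti hzu
            rw [← hql] at this
            exact this
          have heq2 : D.D z = E.ql := le_antisymm hcase hge
          have hP2 : D.P s < D.P (D.D z) := D.P_anti hDzmem hs (by rw [heq2]; exact hlt)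
          rw [hDzinv] at hP2
          exact hP2
        · have h1 : D.P s < D.P E.ql := D.P_anti (ql_mem E) hs hlt
          rw [P_ql_Dstar Mo hDeq] at h1
          linarith
      · rw [max_eq_left hcase] at hlt
        have := D.P_anti hDzmem hs hlt
        rw [hDzinv] at this
        exact this
    · push_neg at hzP
      have h0mem : (0:ℝ) ∈ Icc (0:ℝ) E.qbar := ⟨le_refl _, E.qbar_pos.le⟩
      have h1 : D.P s ≤ D.P 0 := D.P_anti.antitoneOn h0mem hs hs.1
      linarith

end DstarAux

end RobustAux

set_option maxHeartbeats 1000000 in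
open MeasureTheory in
lemma RobustAux.final (E : Env) (Mo : Model E)
    (hDeq : Mo.Dstar E.θu = E.Dl E.θu)
    (hviol : ∃ θ ∈ E.Θ, E.Wl Mo.qstar θ < E.Gstar)
    (qOPT : ℝ → ℝ) (hOPT : Mo.SolvesROPT qOPT)
    (p : ℝ → ℝ) (t : ℝ → Demand E → ℝ) (hpt : Mo.RobustlyOptimalPR p t) :
    Mo.WStar qOPT (fun θ => ∫ y in θ..E.θu, qOPT y) < Mo.WtStar p t := by
  classical
  obtain ⟨⟨⟨hanti_q, hmem_q⟩, hcons⟩, -⟩ := hOPT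
  have hθu_pos : 0 < E.θu := E.θl_pos.trans E.θlu
  have hqu : qOPT E.θu = E.ql := by
    have h1 := hcons E.θu theta_u_mem
    unfold Env.Wl at h1
    rw [intervalIntegral.integral_same] at h1
    by_contra hne
    have := Vl_sub_lt_Gstar E (hmem_q E.θu theta_u_mem) hne
    linarith
  have hql_q : ∀ θ ∈ E.Θ, E.ql ≤ qOPT θ := by
    intro θ hθ
    have := hanti_q hθ theta_u_mem hθ.2
    rw [hqu] at this
    exact this
  set qA : ℝ → ℝ := fun θ => qOPT (clampE E θ) with hqAdef
  have hqA_anti : Antitone qA := fun a b hab => hanti_q clamp_mem clamp_mem (clamp_mono hab)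
  have hqA_mem : ∀ y, qA y ∈ Icc (0:ℝ) E.qbar := fun y => hmem_q _ clamp_mem
  have hqA_eq : ∀ θ ∈ E.Θ, qA θ = qOPT θ := by
    intro θ hθ
    show qOPT (clampE E θ) = qOPT θ
    rw [clamp_eq hθ]
  have hqA_ql : ∀ θ, E.ql ≤ qA θ := fun θ => hql_q _ clamp_mem
  set qS : ℝ → ℝ := xDM Mo Mo.DstarDemand with hqSdef
  have hqS_anti : Antitone qS := xDM_anti Mo _
  have hqS_mem : ∀ y, qS y ∈ Icc (0:ℝ) E.qbar := fun y => xDM_mem Mo _ y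
  have hqS_ql : ∀ θ, qS θ ∈ Icc E.ql E.qbar := fun θ => qS_mem_ql Mo hDeq θ
  have hinner : ∀ θ ∈ E.Θ, (∫ y in θ..E.θu, qOPT y) = ∫ y in θ..E.θu, qA y := by
    intro θ hθ
    refine (intervalIntegral.integral_congr (fun y hy => ?_)).symm
    rw [uIcc_of_le hθ.2] at hy
    exact hqA_eq y ⟨hθ.1.trans hy.1, hy.2⟩
  have hW1 : Mo.WStar qOPT (fun θ => ∫ y in θ..E.θu, qOPT y)
      = ∫ θ in E.θl..E.θu, (Mo.Vstar (qA θ) - Mo.zstar θ * qA θ) * Mo.fstar θ := by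
    rw [← WJ Mo hqA_anti hqA_mem]
    unfold Model.WStar
    refine intervalIntegral.integral_congr (fun θ hθ => ?_)
    rw [uIcc_of_le E.θlu.le] at hθ
    show (Mo.Vstar (qOPT θ) - θ * qOPT θ - ∫ y in θ..E.θu, qOPT y) * Mo.fstar θ
      = (Mo.Vstar (qA θ) - θ * qA θ - ∫ y in θ..E.θu, qA y) * Mo.fstar θ
    rw [hinner θ hθ, ← hqA_eq θ hθ]
  have hW2 : Mo.WtStar (pMc Mo) (tMc Mo)
      = ∫ θ in E.θl..E.θu, (Mo.Vstar (qS θ) - Mo.zstar θ * qS θ) * Mo.fstar θ := by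
    rw [← WJ Mo hqS_anti hqS_mem]
    unfold Model.WtStar
    refine intervalIntegral.integral_congr (fun θ hθ => ?_)
    rw [uIcc_of_le E.θlu.le] at hθ
    have h1 := wt_eq Mo Mo.DstarDemand θ
    have h2 : RMc Mo Mo.DstarDemand θ = ∫ y in θ..E.θu, qS y := by
      unfold RMc
      rw [clamp_eq hθ]
    rw [h1, h2]
    rfl
  have hpoint_le : ∀ θ ∈ E.Θ,
      Mo.Vstar (qA θ) - Mo.zstar θ * qA θ ≤ Mo.Vstar (qS θ) - Mo.zstar θ * qS θ := by
    intro θ hθ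
    by_cases he : qA θ = qS θ
    · rw [he]
    · exact (psi_max Mo hDeq hθ ⟨hqA_ql θ, (hqA_mem θ).2⟩ he).le
  have hzpoint : ∀ θ ∈ E.Θ, ∀ x : ℝ,
      (Mo.Vstar x - Mo.zstar θ * x) * Mo.fstar θ
        = (Mo.Vstar x - θ * x) * Mo.fstar θ - FcM Mo θ * x := by
    intro θ hθ x
    have hf := Mo.fstar_pos θ hθ
    have hz : Mo.zstar θ * Mo.fstar θ = θ * Mo.fstar θ + Mo.Fstar θ := by
      unfold Model.zstar
      field_simp
    rw [FcM_eq Mo hθ]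
    linear_combination (-x) * hz
  set gA : ℝ → ℝ := fun θ => (Mo.Vstar (qA θ) - θ * qA θ) * Mo.fstar θ - FcM Mo θ * qA θ
    with hgAdef
  set gS : ℝ → ℝ := fun θ => (Mo.Vstar (qS θ) - θ * qS θ) * Mo.fstar θ - FcM Mo θ * qS θ
    with hgSdef
  have hgA_eq : (∫ θ in E.θl..E.θu, (Mo.Vstar (qA θ) - Mo.zstar θ * qA θ) * Mo.fstar θ)
      = ∫ θ in E.θl..E.θu, gA θ := by
    refine intervalIntegral.integral_congr (fun θ hθ => ?_)
    rw [uIcc_of_le E.θlu.le] at hθ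
    exact hzpoint θ hθ (qA θ)
  have hgS_eq : (∫ θ in E.θl..E.θu, (Mo.Vstar (qS θ) - Mo.zstar θ * qS θ) * Mo.fstar θ)
      = ∫ θ in E.θl..E.θu, gS θ := by
    refine intervalIntegral.integral_congr (fun θ hθ => ?_)
    rw [uIcc_of_le E.θlu.le] at hθ
    exact hzpoint θ hθ (qS θ)
  have hIA : IntervalIntegrable gA MeasureTheory.volume E.θl E.θu := by
    rw [intervalIntegrable_iff_integrableOn_Ioc_of_le E.θlu.le]
    exact (I1int Mo hqA_anti hqA_mem).sub (I3int Mo hqA_anti hqA_mem)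
  have hIS : IntervalIntegrable gS MeasureTheory.volume E.θl E.θu := by
    rw [intervalIntegrable_iff_integrableOn_Ioc_of_le E.θlu.le]
    exact (I1int Mo hqS_anti hqS_mem).sub (I3int Mo hqS_anti hqS_mem)
  have hlt : (∫ θ in E.θl..E.θu, (Mo.Vstar (qA θ) - Mo.zstar θ * qA θ) * Mo.fstar θ)
      < ∫ θ in E.θl..E.θu, (Mo.Vstar (qS θ) - Mo.zstar θ * qS θ) * Mo.fstar θ := by
    rw [hgA_eq, hgS_eq]
    by_contra hc
    push_neg at hc
    have hnn : ∀ θ ∈ Icc E.θl E.θu, 0 ≤ gS θ - gA θ := by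
      intro θ hθ
      have hle := hpoint_le θ hθ
      have h1 := (hzpoint θ hθ (qA θ)).symm
      have h2 := (hzpoint θ hθ (qS θ)).symm
      have hf := (Mo.fstar_pos θ hθ).le
      show 0 ≤ gS θ - gA θ
      rw [hgAdef, hgSdef]
      simp only []
      rw [← hzpoint θ hθ (qA θ), ← hzpoint θ hθ (qS θ)]
      exact sub_nonneg.2 (mul_le_mul_of_nonneg_right hle hf)
    have hint_diff : IntervalIntegrable (fun θ => gS θ - gA θ)
        MeasureTheory.volume E.θl E.θu := hIS.sub hIA
    have hzero : ∫ θ in E.θl..E.θu, (gS θ - gA θ) = 0 := by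
      have hge : 0 ≤ ∫ θ in E.θl..E.θu, (gS θ - gA θ) :=
        intervalIntegral.integral_nonneg E.θlu.le hnn
      have hle2 : (∫ θ in E.θl..E.θu, (gS θ - gA θ))
          = (∫ θ in E.θl..E.θu, gS θ) - ∫ θ in E.θl..E.θu, gA θ :=
        intervalIntegral.integral_sub hIS hIA
      linarith
    have haez : (fun θ => gS θ - gA θ)
        =ᵐ[MeasureTheory.volume.restrict (Ioc E.θl E.θu)] 0 := by
      refine (intervalIntegral.integral_eq_zero_iff_of_le_of_nonneg_ae E.θlu.le ?_
        hint_diff).1 hzero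
      filter_upwards [ae_restrict_mem measurableSet_Ioc] with θ hθ
      exact hnn θ ⟨hθ.1.le, hθ.2⟩
    have haeq : ∀ᵐ θ ∂(MeasureTheory.volume.restrict (Ioc E.θl E.θu)), qA θ = qS θ := by
      filter_upwards [haez, ae_restrict_mem measurableSet_Ioc] with θ hz hθ
      have hθ' : θ ∈ E.Θ := ⟨hθ.1.le, hθ.2⟩
      by_contra hne
      have hstrict := psi_max Mo hDeq hθ' ⟨hqA_ql θ, (hqA_mem θ).2⟩ hne
      have hf := Mo.fstar_pos θ hθ'
      have hval : ((Mo.Vstar (qS θ) - Mo.zstar θ * qS θ)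
          - (Mo.Vstar (qA θ) - Mo.zstar θ * qA θ)) * Mo.fstar θ = 0 := by
        have h1 := hzpoint θ hθ' (qA θ)
        have h2 := hzpoint θ hθ' (qS θ)
        have hz0 : gS θ - gA θ = 0 := hz
        rw [hgAdef, hgSdef] at hz0
        simp only [] at hz0
        nlinarith [h1, h2, hz0]
      rcases mul_eq_zero.1 hval with h | h
      · nlinarith [hstrict]
      · exact absurd h hf.ne'
    have hIeq : ∀ θ ∈ E.Θ, (∫ y in θ..E.θu, qA y) = ∫ y in θ..E.θu, qS y := by
      intro θ hθ
      refine intervalIntegral.integral_congr_ae ?_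
      have h1 := (ae_restrict_iff' measurableSet_Ioc).1 haeq
      filter_upwards [h1] with y hy hymem
      rw [uIoc_of_le hθ.2] at hymem
      exact hy ⟨hθ.1.trans_lt hymem.1, hymem.2⟩
    obtain ⟨θ0, hθ0, hv⟩ := hviol
    have hqstar_eq : ∀ y ∈ E.Θ, Mo.qstar y = qS y := fun y hy => (xDM_qstar Mo hDeq hy).symm
    have hWlv : E.Vl (qS θ0) - θ0 * qS θ0 - (∫ y in θ0..E.θu, qS y) < E.Gstar := by
      unfold Env.Wl at hv
      have h1 : Mo.qstar θ0 = qS θ0 := hqstar_eq θ0 hθ0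
      have h2 : (∫ y in θ0..E.θu, Mo.qstar y) = ∫ y in θ0..E.θu, qS y := by
        refine intervalIntegral.integral_congr (fun y hy => ?_)
        rw [uIcc_of_le hθ0.2] at hy
        exact hqstar_eq y ⟨hθ0.1.trans hy.1, hy.2⟩
      rw [h1, h2] at hv
      exact hv
    have hθ0u : θ0 < E.θu := by
      rcases lt_or_eq_of_le hθ0.2 with h | h
      · exact h
      · exfalso
        rw [h] at hWlv
        have hqSu : qS E.θu = E.ql := by
          show xDM Mo Mo.DstarDemand E.θu = E.ql
          rw [xDM_u]
          exact hDeq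
        rw [hqSu, intervalIntegral.integral_same] at hWlv
        have hG : E.Gstar = E.Vl E.ql - E.θu * E.ql := rfl
        linarith
    obtain ⟨CPl, hCPl0, hCPl⟩ := E.DlDemand.exists_P_bound
    set c0 := E.Gstar + (∫ y in θ0..E.θu, qS y) - (E.Vl (qS θ0) - θ0 * qS θ0) with hc0def
    have hc0 : 0 < c0 := by rw [hc0def]; linarith
    set ε := c0 / (2 * (CPl + E.θu + 1)) with hεdef
    have hεpos : 0 < ε := div_pos hc0 (by linarith)
    obtain ⟨δ1, hδ1pos, hδ1⟩ := Mo.DstarDemand.D_right_cont (pMc Mo θ0) hεpos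
    have hpc := (pM_cont Mo).continuousAt (x := θ0)
    rw [Metric.continuousAt_iff] at hpc
    obtain ⟨δ2, hδ2pos, hδ2⟩ := hpc δ1 hδ1pos
    set δ := min (δ2 / 2) (min (c0 / (8 * (E.qbar + 1))) (E.θu - θ0)) with hδdef
    have hδpos : 0 < δ := lt_min (by linarith)
      (lt_min (div_pos hc0 (by linarith [E.qbar_pos])) (by linarith))
    have hδu : δ ≤ E.θu - θ0 := (min_le_right _ _).trans (min_le_right _ _)
    have hδc : δ ≤ c0 / (8 * (E.qbar + 1)) := (min_le_right _ _).trans (min_le_left _ _)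
    have hδ2' : δ ≤ δ2 / 2 := min_le_left _ _
    have hbadmeas : MeasurableSet {θ : ℝ | ¬ qA θ = qS θ} := by
      have h1 : {θ : ℝ | ¬ qA θ = qS θ} = (fun θ => qA θ - qS θ) ⁻¹' ({0}ᶜ) := by
        ext θ
        simp [sub_eq_zero]
      rw [h1]
      exact (hqA_anti.measurable.sub hqS_anti.measurable) (measurableSet_singleton 0).compl
    have hbad0 : MeasureTheory.volume ({θ : ℝ | ¬ qA θ = qS θ} ∩ Ioc E.θl E.θu) = 0 := by
      have h1 := haeq
      rw [MeasureTheory.ae_iff] at h1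
      rw [Measure.restrict_apply hbadmeas] at h1
      exact h1
    obtain ⟨θ', hθ'mem, hθ'eq⟩ : ∃ θ', θ' ∈ Ioc θ0 (θ0 + δ) ∧ qA θ' = qS θ' := by
      by_contra hno
      push_neg at hno
      have hsub : Ioc θ0 (θ0 + δ) ⊆ {θ : ℝ | ¬ qA θ = qS θ} ∩ Ioc E.θl E.θu := by
        intro y hy
        exact ⟨hno y hy, ⟨hθ0.1.trans_lt hy.1, hy.2.trans (by linarith)⟩⟩
      have hmes : MeasureTheory.volume (Ioc θ0 (θ0 + δ))
          ≤ MeasureTheory.volume ({θ : ℝ | ¬ qA θ = qS θ} ∩ Ioc E.θl E.θu) :=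
        measure_mono hsub
      rw [hbad0] at hmes
      have h2 : MeasureTheory.volume (Ioc θ0 (θ0 + δ)) = ENNReal.ofReal δ := by
        rw [Real.volume_Ioc]
        ring_nf
      rw [h2] at hmes
      have h3 : (0:ENNReal) < ENNReal.ofReal δ := ENNReal.ofReal_pos.2 hδpos
      exact absurd (le_antisymm hmes zero_le) h3.ne'
    have hθ'Θ : θ' ∈ E.Θ := ⟨hθ0.1.trans hθ'mem.1.le, hθ'mem.2.trans (by linarith)⟩
    have hfeas' := hcons θ' hθ'Θ
    unfold Env.Wl at hfeas'
    rw [← hqA_eq θ' hθ'Θ, hθ'eq] at hfeas'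
    have hint' : (∫ y in θ'..E.θu, qOPT y) = ∫ y in θ'..E.θu, qS y := by
      rw [hinner θ' hθ'Θ, hIeq θ' hθ'Θ]
    rw [hint'] at hfeas'
    -- estimates
    have hpM_near : pMc Mo θ' ∈ Icc (pMc Mo θ0) (pMc Mo θ0 + δ1) := by
      constructor
      · exact pM_mono Mo hθ'mem.1.le
      · have hd : dist θ' θ0 < δ2 := by
          rw [Real.dist_eq, abs_of_nonneg (by linarith [hθ'mem.1] : (0:ℝ) ≤ θ' - θ0)]
          have := hθ'mem.2
          linarith
        have h2 := hδ2 hd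
        rw [Real.dist_eq] at h2
        have h3 := pM_mono Mo hθ'mem.1.le
        rw [abs_of_nonneg (by linarith : (0:ℝ) ≤ pMc Mo θ' - pMc Mo θ0)] at h2
        linarith
    have hqS_near : qS θ0 - ε < qS θ' := hδ1 _ hpM_near
    have hqS_le : qS θ' ≤ qS θ0 := hqS_anti hθ'mem.1.le
    have hV_near : |E.Vl (qS θ') - E.Vl (qS θ0)| ≤ CPl * ε := by
      have h1 := E.DlDemand.V_sub_le (hqS_mem θ0) (hqS_mem θ') hCPl
      calc |E.Vl (qS θ') - E.Vl (qS θ0)| ≤ CPl * |qS θ' - qS θ0| := h1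
        _ ≤ CPl * ε := by
            refine mul_le_mul_of_nonneg_left ?_ hCPl0
            rw [abs_of_nonpos (by linarith)]
            linarith
    have hI_near : |(∫ y in θ'..E.θu, qS y) - ∫ y in θ0..E.θu, qS y| ≤ E.qbar * δ := by
      have hadj := intervalIntegral.integral_add_adjacent_intervals
        (xDM_intInt Mo Mo.DstarDemand θ0 θ') (xDM_intInt Mo Mo.DstarDemand θ' E.θu)
      have hd : (∫ y in θ'..E.θu, qS y) - (∫ y in θ0..E.θu, qS y)
          = -(∫ y in θ0..θ', qS y) := by
        rw [hqSdef]
        linarith [hadj]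
      rw [hd, abs_neg]
      calc |∫ y in θ0..θ', qS y| ≤ E.qbar * |θ' - θ0| := by
            rw [← Real.norm_eq_abs]
            refine intervalIntegral.norm_integral_le_of_norm_le_const (fun y _ => ?_)
            rw [Real.norm_eq_abs, abs_of_nonneg (hqS_mem y).1]
            exact (hqS_mem y).2
        _ ≤ E.qbar * δ := by
            refine mul_le_mul_of_nonneg_left ?_ E.qbar_pos.le
            rw [abs_of_nonneg (by linarith [hθ'mem.1] : (0:ℝ) ≤ θ' - θ0)]
            linarith [hθ'mem.2]
    have hε1 : (CPl + E.θu) * ε ≤ c0 / 2 := by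
      have hd : (0:ℝ) < 2 * (CPl + E.θu + 1) := by linarith
      have heq2 : (CPl + E.θu) * ε = c0 * (CPl + E.θu) / (2 * (CPl + E.θu + 1)) := by
        rw [hεdef]
        ring
      rw [heq2, div_le_div_iff₀ hd (by norm_num : (0:ℝ) < 2)]
      nlinarith [mul_nonneg hc0.le hCPl0, mul_nonneg hc0.le hθu_pos.le, hc0.le]
    have hδ4 : E.qbar * δ ≤ c0 / 8 := by
      have hd : (0:ℝ) < 8 * (E.qbar + 1) := by linarith [E.qbar_pos]
      have h1 : E.qbar * δ ≤ E.qbar * (c0 / (8 * (E.qbar + 1))) :=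
        mul_le_mul_of_nonneg_left hδc E.qbar_pos.le
      have heq2 : E.qbar * (c0 / (8 * (E.qbar + 1))) = c0 * E.qbar / (8 * (E.qbar + 1)) := by
        ring
      rw [heq2] at h1
      have h2 : c0 * E.qbar / (8 * (E.qbar + 1)) ≤ c0 / 8 := by
        rw [div_le_div_iff₀ hd (by norm_num : (0:ℝ) < 8)]
        nlinarith [mul_nonneg hc0.le E.qbar_pos.le, hc0.le]
      linarith
    -- combine
    have e1 : E.Vl (qS θ') ≤ E.Vl (qS θ0) + CPl * ε := by
      have := abs_le.1 hV_near
      linarith [this.2]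
    have hθ'pos : 0 < θ' := E.θl_pos.trans_le hθ'Θ.1
    have e2 : θ0 * qS θ0 - E.θu * ε ≤ θ' * qS θ' := by
      have h1 : 0 ≤ θ' * (qS θ' - (qS θ0 - ε)) := mul_nonneg hθ'pos.le (by linarith)
      have h2 : 0 ≤ (θ' - θ0) * qS θ0 :=
        mul_nonneg (by linarith [hθ'mem.1]) (hqS_mem θ0).1
      have h3 : θ' * ε ≤ E.θu * ε := mul_le_mul_of_nonneg_right hθ'Θ.2 hεpos.le
      nlinarith [h1, h2, h3]
    have e3 : (∫ y in θ0..E.θu, qS y) - E.qbar * δ ≤ ∫ y in θ'..E.θu, qS y := by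
      have h1 := (abs_le.1 hI_near).1
      linarith
    have e1' := (abs_le.1 hV_near).2
    have hfinal : E.Gstar ≤ E.Gstar - c0 + (CPl + E.θu) * ε + E.qbar * δ := by
      have hgoal : E.Vl (qS θ0) - θ0 * qS θ0 - (∫ y in θ0..E.θu, qS y)
          = E.Gstar - c0 := by
        rw [hc0def]
        ring
      nlinarith [hfeas', e1, e2, e3]
    linarith
  have hshort := M_shortlist Mo
  have hfin := hpt.2 (pMc Mo) (tMc Mo) hshort
  rw [hW1]
  calc (∫ θ in E.θl..E.θu, (Mo.Vstar (qA θ) - Mo.zstar θ * qA θ) * Mo.fstar θ)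
      < ∫ θ in E.θl..E.θu, (Mo.Vstar (qS θ) - Mo.zstar θ * qS θ) * Mo.fstar θ := hlt
    _ = Mo.WtStar (pMc Mo) (tMc Mo) := hW2.symm
    _ ≤ Mo.WtStar p t := hfin

/-- Proposition 4(2): if `D*(θu) = D̲(θu)` and the Baron–Myerson-with-quantity-floor
schedule does not solve (ROPT), price regulation strictly dominates quantity regulation. -/
theorem price_strictly_dominates_quantity (E : Env) (Mo : Model E)
    (hDeq : Mo.Dstar E.θu = E.Dl E.θu)
    (hviol : ∃ θ ∈ E.Θ, E.Wl Mo.qstar θ < E.Gstar)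
    (qOPT : ℝ → ℝ) (hOPT : Mo.SolvesROPT qOPT)
    (p : ℝ → ℝ) (t : ℝ → Demand E → ℝ) (hpt : Mo.RobustlyOptimalPR p t) :
    Mo.WStar qOPT (fun θ => ∫ y in θ..E.θu, qOPT y) < Mo.WtStar p t :=
  RobustAux.final E Mo hDeq hviol qOPT hOPT p t hpt
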